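/- arXiv:1212.1231 — 6 statements merged into one kernel-verified Lean document; each statement's English description precedes it below -/
import Mathlib

section
/- Let f : [a,b] → ℝ∪{±∞} be a lower-semicontinuous function and let s : [c,d] → [a,b] be a nondecreasing continuous function. Suppose s is differentiable at a point t ∈ (c,d) with s'(t) ≠ 0, and that f(s(t)) is finite. Then |∇(f∘s)|(t) = |∇f|(s(t)) · |s'(t)|. -/
open Filter Topology MeasureTheory Set NNReal ENNReal Pointwise

/-- Convert an extended real to an extended nonnegative real (negatives map to `0`). -/
noncomputable def EReal.toENNReal' (x : EReal) : ℝ≥0∞ :=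
  if x = ⊤ then ⊤ else ENNReal.ofReal x.toReal

section MetricDefs

variable {X : Type*} [MetricSpace X]

/-- The slope `|∇f|(xc) = limsup_{x → xc, x ≠ xc} (f(xc) − f(x))⁺ / d(xc,x)`. -/
noncomputable def mSlope (f : X → EReal) (xc : X) : ℝ≥0∞ :=
  Filter.limsup (fun x => (f xc - f x).toENNReal' / edist xc x) (𝓝[≠] xc)

/-- The slope of `f` at `xc` relative to a set `S`. -/
noncomputable def mSlopeOn (f : X → EReal) (S : Set X) (xc : X) : ℝ≥0∞ :=
  Filter.limsup (fun x => (f xc - f x).toENNReal' / edist xc x) (𝓝[S \ {xc}] xc)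

/-- The limiting slope `|∇f|⁻(xc) = liminf_{x → xc, f(x) → f(xc)} |∇f|(x)`. -/
noncomputable def limSlope (f : X → EReal) (xc : X) : ℝ≥0∞ :=
  Filter.liminf (fun x => mSlope f x)
    (Filter.comap (fun x => (x, f x)) (𝓝 (xc, f xc)))

/-- `γ` has metric derivative `m` at `t`:  `lim_{s→t} d(γ(s),γ(t))/|s−t| = m`. -/
def HasMetricDerivAt (γ : ℝ → X) (t : ℝ) (m : ℝ) : Prop :=
  Tendsto (fun s => dist (γ s) (γ t) / |s - t|) (𝓝[≠] t) (𝓝 m)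

/-- `γ` is absolutely continuous on `[a,b]`. -/
def AbsContOn (γ : ℝ → X) (a b : ℝ) : Prop :=
  ∃ m : ℝ → ℝ, IntegrableOn m (Icc a b) ∧
    ∀ s t : ℝ, a ≤ s → s ≤ t → t ≤ b → dist (γ s) (γ t) ≤ ∫ τ in s..t, m τ

/-- `γ : [a,b] → X` is a near-steepest descent curve for `f`. -/
def NearSteepestDescentCurve (f : X → EReal) (a b : ℝ) (γ : ℝ → X) : Prop :=
  LipschitzOnWith 1 γ (Icc a b) ∧
  AntitoneOn (fun t => f (γ t)) (Icc a b) ∧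
  ∀ᵐ t ∂(volume.restrict (Icc a b)), ∃ d : ℝ,
    HasDerivAt (fun τ => (f (γ τ)).toReal) d t ∧
    limSlope f (γ t) ≤ ENNReal.ofReal |d|

/-- `γ : [a,b] → X` is a curve of near-maximal slope for `f`. -/
def NearMaximalSlopeCurve (f : X → EReal) (a b : ℝ) (γ : ℝ → X) : Prop :=
  AbsContOn γ a b ∧
  (∀ᵐ t ∂(volume.restrict (Icc a b)), ∃ m : ℝ,
      HasMetricDerivAt γ t m ∧ ENNReal.ofReal m = limSlope f (γ t)) ∧
  AntitoneOn (fun t => f (γ t)) (Icc a b) ∧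
  ∀ᵐ t ∂(volume.restrict (Icc a b)), ∃ d : ℝ,
    HasDerivAt (fun τ => (f (γ τ)).toReal) d t ∧
    (limSlope f (γ t)) ^ 2 ≤ ENNReal.ofReal (-d)

/-- `S` is a metric segment between `x` and `y`. -/
def IsMetricSegment (S : Set X) (x y : X) : Prop :=
  ∃ (a b : ℝ) (ω : ℝ → X), a ≤ b ∧
    (∀ s ∈ Icc a b, ∀ t ∈ Icc a b, dist (ω s) (ω t) = |s - t|) ∧
    ω '' Icc a b = S ∧ ω a = x ∧ ω b = y

/-- A subset `U` is metrically convex (in the induced metric). -/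
def IsConvexMetricSubset (U : Set X) : Prop :=
  ∀ x ∈ U, ∀ y ∈ U, x ≠ y → ∃ S ⊆ U, IsMetricSegment S x y

/-- `X` is a locally convex metric space. -/
def LocallyConvexMetricSpace (X : Type*) [MetricSpace X] : Prop :=
  ∀ x : X, ∃ U ∈ 𝓝 x, IsConvexMetricSubset U

/-- `f` is continuous on slope-bounded sets. -/
def ContinuousOnSlopeBoundedSets (f : X → EReal) : Prop :=
  ∀ xc : X, (∃ r : ℝ, f xc = (r : EReal)) →
    ∀ x : ℕ → X, Tendsto x atTop (𝓝 xc) →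
      (∃ C : ℝ≥0∞, C ≠ ⊤ ∧ ∀ i, mSlope f (x i) ≤ C) →
      (∃ C : ℝ, ∀ i, dist (x i) xc ≤ C) →
      (∃ C : ℝ, ∀ i, f (x i) ≤ (C : EReal)) →
      Tendsto (fun i => f (x i)) atTop (𝓝 (f xc))

end MetricDefs

section EuclideanDefs


variable {H : Type*} [NormedAddCommGroup H] [InnerProductSpace ℝ H]

/-- The Fréchet subdifferential `∂̂f(xc)`. -/
def frechetSubdiff (f : H → EReal) (xc : H) : Set H :=
  {v | (∃ r : ℝ, f xc = (r : EReal)) ∧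
    ∀ ε : ℝ, 0 < ε → ∀ᶠ x in 𝓝 xc,
      f xc + (((inner ℝ v (x - xc) : ℝ) - ε * ‖x - xc‖ : ℝ) : EReal) ≤ f x}

/-- The limiting subdifferential `∂f(xc)`. -/
def limitingSubdiff (f : H → EReal) (xc : H) : Set H :=
  {v | (∃ r : ℝ, f xc = (r : EReal)) ∧
    ∃ (x : ℕ → H) (w : ℕ → H), (∀ i, w i ∈ frechetSubdiff f (x i)) ∧
      Tendsto x atTop (𝓝 xc) ∧ Tendsto (fun i => f (x i)) atTop (𝓝 (f xc)) ∧
      Tendsto w atTop (𝓝 v)}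

/-- The horizon subdifferential `∂^∞ f(xc)`. -/
def horizonSubdiff (f : H → EReal) (xc : H) : Set H :=
  {v | (∃ r : ℝ, f xc = (r : EReal)) ∧
    ∃ (τ : ℕ → ℝ) (x : ℕ → H) (w : ℕ → H),
      (∀ i, 0 < τ i) ∧ Tendsto τ atTop (𝓝 0) ∧
      (∀ i, w i ∈ frechetSubdiff f (x i)) ∧
      Tendsto x atTop (𝓝 xc) ∧ Tendsto (fun i => f (x i)) atTop (𝓝 (f xc)) ∧
      Tendsto (fun i => τ i • w i) atTop (𝓝 v)}

/-- The Clarke subdifferential `∂_c f(xc) = cl conv [∂f(xc) + ∂^∞ f(xc)]`. -/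
noncomputable def clarkeSubdiff (f : H → EReal) (xc : H) : Set H :=
  closure (convexHull ℝ (limitingSubdiff f xc + horizonSubdiff f xc))

/-- The (non-convex) conical hull `{λ v : λ ≥ 0, v ∈ S}`. -/
def coneHull (S : Set H) : Set H := {w | ∃ lam : ℝ, 0 ≤ lam ∧ ∃ v ∈ S, w = lam • v}

open Classical in
/-- The extended-real-valued indicator function of a set. -/
noncomputable def erealIndicator (Q : Set H) : H → EReal := fun x => if x ∈ Q then 0 else ⊤

/-- The limiting normal cone `N_Q(xc) = ∂ δ_Q(xc)`. -/
def limitingNormalCone (Q : Set H) (xc : H) : Set H := limitingSubdiff (erealIndicator Q) xc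

/-- The Fréchet normal cone `N̂_Q(xc) = ∂̂ δ_Q(xc)`. -/
def frechetNormalCone (Q : Set H) (xc : H) : Set H := frechetSubdiff (erealIndicator Q) xc

/-- `Q` is Clarke regular at `xc`. -/
def ClarkeRegularAt (Q : Set H) (xc : H) : Prop :=
  xc ∈ Q ∧ (∃ ε : ℝ, 0 < ε ∧ IsClosed (Q ∩ Metric.closedBall xc ε)) ∧
  limitingNormalCone Q xc = frechetNormalCone Q xc

/-- `f` is subdifferentially regular at `xc`: `f(xc)` is finite and `epi f` is
Clarke regular at `(xc, f(xc))` as a subset of `H × ℝ` (with the euclidean product structure). -/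
def SubdiffRegularAt (f : H → EReal) (xc : H) : Prop :=
  (∃ r : ℝ, f xc = (r : EReal)) ∧
  ClarkeRegularAt {p : WithLp 2 (H × ℝ) | f p.ofLp.1 ≤ (p.ofLp.2 : EReal)}
    ((WithLp.equiv 2 (H × ℝ)).symm (xc, (f xc).toReal))

/-- The tangent cone `T_Q(xc)`. -/
def tangentConeAt' (Q : Set H) (xc : H) : Set H :=
  {v | ∃ (lam : ℕ → ℝ) (x : ℕ → H), (∀ i, x i ∈ Q) ∧ Tendsto lam atTop atTop ∧
    Tendsto (fun i => lam i • (x i - xc)) atTop (𝓝 v)}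

/-- The limiting slope of `f` admits a chain rule. -/
def LimitingSlopeChainRule (f : H → EReal) : Prop :=
  ∀ (a b : ℝ) (x : ℝ → H), AbsContOn x a b →
    AntitoneOn (fun t => f (x t)) (Icc a b) →
    (∀ᵐ t ∂(volume.restrict (Icc a b)), (limitingSubdiff f (x t)).Nonempty) →
    ∀ᵐ t ∂(volume.restrict (Icc a b)), ∃ (d : ℝ) (x' : H),
      HasDerivAt (fun τ => (f (x τ)).toReal) d t ∧ HasDerivAt x x' t ∧
      ∀ v ∈ limitingSubdiff f (x t), d = (inner ℝ v x' : ℝ)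

/-- `f` is locally Lipschitz continuous on its domain. -/
def LocLipschitzOnDomain (f : H → EReal) : Prop :=
  ∀ x : H, f x ≠ ⊤ → ∃ (K : ℝ≥0) (ε : ℝ), 0 < ε ∧
    (∀ y ∈ Metric.ball x ε, f y ≠ ⊤ → ∃ r : ℝ, f y = (r : EReal)) ∧
    LipschitzOnWith K (fun y => (f y).toReal) (Metric.ball x ε ∩ {y | f y ≠ ⊤})

end EuclideanDefs

section Semialgebraic

/-- A semialgebraic subset of `ℝᵐ`: a finite union of sets defined by finitely many
polynomial equalities and strict inequalities. -/
def IsSemialgebraic {m : ℕ} (S : Set (EuclideanSpace ℝ (Fin m))) : Prop :=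
  ∃ (k : ℕ) (P Q : Fin k → Finset (MvPolynomial (Fin m) ℝ)),
    S = ⋃ i : Fin k, {x | (∀ p ∈ P i, MvPolynomial.eval (fun j => x j) p = 0) ∧
                         (∀ q ∈ Q i, MvPolynomial.eval (fun j => x j) q < 0)}

/-- A semialgebraic function: one whose epigraph is semialgebraic. -/
def IsSemialgebraicFn {n : ℕ} (f : EuclideanSpace ℝ (Fin n) → EReal) : Prop :=
  IsSemialgebraic {y : EuclideanSpace ℝ (Fin (n + 1)) |
    f ((WithLp.equiv 2 _).symm (fun i : Fin n => y i.castSucc)) ≤ ((y (Fin.last n) : ℝ) : EReal)}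

end Semialgebraic

/-!
Near `t`, `s` is continuous and monotone, and `s' ≠ 0` forces `s τ ≠ s t` for `τ ≠ t`; by the
intermediate value theorem `s` then maps punctured neighbourhoods of `t` onto punctured
neighbourhoods of `s t`, so the slope of `f` at `s t` is a limsup along `τ → t`. The difference
quotient of `f ∘ s` at `t` factors as that of `f` at `s t` times `|s τ - s t| / |τ - t|`, and the
second factor tends to the finite positive limit `|s'|`, which can be pulled out of the limsup.
-/

theorem ENNReal.limsup_mul_of_tendsto {α : Type*} {F : Filter α} [F.NeBot] {u v : α → ℝ≥0∞}
    {L : ℝ≥0∞} (hv : Tendsto v F (𝓝 L)) (hL0 : L ≠ 0) (hLtop : L ≠ ∞) :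
    limsup (u * v) F = limsup u F * L := by
  refine le_antisymm ?_ ?_
  · have h := ENNReal.limsup_mul_le' (u := u) (Or.inr (hv.limsup_eq ▸ hLtop))
      (Or.inr (hv.limsup_eq ▸ hL0))
    rwa [hv.limsup_eq] at h
  · simpa only [hv.liminf_eq] using ENNReal.le_limsup_mul (u := u) (v := v) (f := F)

theorem HasDerivAt.tendsto_edist_div_edist {𝕜 E : Type*} [NontriviallyNormedField 𝕜]
    [NormedAddCommGroup E] [NormedSpace 𝕜 E] {f : 𝕜 → E} {f' : E} {x : 𝕜}
    (hf : HasDerivAt f f' x) :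
    Tendsto (fun y => edist (f x) (f y) / edist x y) (𝓝[≠] x) (𝓝 ‖f'‖ₑ) := by
  refine (continuous_enorm.tendsto f' |>.comp (hasDerivAt_iff_tendsto_slope.1 hf)).congr' ?_
  filter_upwards [self_mem_nhdsWithin] with y (hy : y ≠ x)
  rw [Function.comp_apply, slope_def_module, enorm_smul, enorm_inv (sub_ne_zero.2 hy),
    edist_comm, edist_eq_enorm_sub, edist_comm, edist_eq_enorm_sub, ENNReal.div_eq_inv_mul]

theorem MonotoneOn.map_nhdsNE {s : ℝ → ℝ} {U : Set ℝ} {t : ℝ} (hmono : MonotoneOn s U)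
    (hcont : ContinuousOn s U) (hU : U ∈ 𝓝 t) (hne : ∀ᶠ τ in 𝓝[≠] t, s τ ≠ s t) :
    map s (𝓝[≠] t) = 𝓝[≠] (s t) := by
  refine le_antisymm (tendsto_nhdsWithin_iff.2
    ⟨(hcont.continuousAt hU).tendsto.mono_left nhdsWithin_le_nhds, hne⟩) fun W hW => ?_
  obtain ⟨ε, hε, hball⟩ := (nhdsWithin_hasBasis Metric.nhds_basis_closedBall _).mem_iff.1
    (Filter.Eventually.and (mem_nhdsWithin_of_mem_nhds hU) (hne.and hW))
  rw [Real.closedBall_eq_Icc] at hball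
  have hnear : ∀ τ ∈ Icc (t - ε) (t + ε), τ ≠ t → τ ∈ U ∧ s τ ≠ s t ∧ s τ ∈ W :=
    fun τ hτ hτt => hball ⟨hτ, hτt⟩
  have hsub : Icc (t - ε) (t + ε) ⊆ U := fun τ hτ =>
    if hτt : τ = t then hτt ▸ mem_of_mem_nhds hU else (hnear τ hτ hτt).1
  have hl : t - ε ∈ Icc (t - ε) (t + ε) := left_mem_Icc.2 (by linarith)
  have hu : t + ε ∈ Icc (t - ε) (t + ε) := right_mem_Icc.2 (by linarith)
  have htI : t ∈ Icc (t - ε) (t + ε) := ⟨by linarith, by linarith⟩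
  have hlt : s (t - ε) < s t := (hmono (hsub hl) (hsub htI) (by linarith)).lt_of_ne
    (hnear _ hl (by linarith)).2.1
  have hgt : s t < s (t + ε) := (hmono (hsub htI) (hsub hu) (by linarith)).lt_of_ne'
    (hnear _ hu (by linarith)).2.1
  refine mem_nhdsWithin.2 ⟨Ioo (s (t - ε)) (s (t + ε)), isOpen_Ioo, ⟨hlt, hgt⟩, ?_⟩
  rintro y ⟨hy, hyt : y ≠ s t⟩
  obtain ⟨τ, hτ, rfl⟩ := intermediate_value_Icc (by linarith) (hcont.mono hsub)
    (Ioo_subset_Icc_self hy)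
  exact (hnear τ hτ (by rintro rfl; exact hyt rfl)).2.2

theorem statement0_general (a b c d : ℝ) (f : ℝ → EReal) (s : ℝ → ℝ)
    (hs_mono : MonotoneOn s (Icc c d)) (hs_cont : ContinuousOn s (Icc c d))
    (hs_maps : MapsTo s (Icc c d) (Icc a b))
    (t : ℝ) (ht : t ∈ Ioo c d) (s' : ℝ) (hderiv : HasDerivAt s s' t) (hs' : s' ≠ 0) :
    mSlopeOn (fun τ => f (s τ)) (Icc c d) t
      = mSlopeOn f (Icc a b) (s t) * ENNReal.ofReal |s'| := by
  have hU : Icc c d ∈ 𝓝 t := Icc_mem_nhds ht.1 ht.2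
  have hne : ∀ᶠ τ in 𝓝[≠] t, s τ ≠ s t := hderiv.eventually_ne hs'
  have hmap : map s (𝓝[≠] t) = 𝓝[≠] (s t) := hs_mono.map_nhdsNE hs_cont hU hne
  have hdom : 𝓝[Icc c d \ {t}] t = 𝓝[≠] t :=
    nhdsWithin_inter_of_mem (mem_nhdsWithin_of_mem_nhds hU)
  have hcod : 𝓝[Icc a b \ {s t}] (s t) = 𝓝[≠] (s t) := by
    refine nhdsWithin_inter_of_mem (s := Icc a b) (t := {s t}ᶜ) ?_
    rw [← hmap]
    exact mem_map.2 (mem_of_superset (mem_nhdsWithin_of_mem_nhds hU) hs_maps.subset_preimage)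
  have hfactor : (fun τ => (f (s t) - f (s τ)).toENNReal' / edist t τ) =ᶠ[𝓝[≠] t]
      (fun τ => (f (s t) - f (s τ)).toENNReal' / edist (s t) (s τ)) *
        fun τ => edist (s t) (s τ) / edist t τ := by
    filter_upwards [hne] with τ hτ
    rw [Pi.mul_apply, ← mul_div_assoc, ENNReal.div_mul_cancel (edist_pos.2 hτ.symm).ne'
      (edist_ne_top _ _)]
  rw [mSlopeOn, mSlopeOn, hdom, hcod, limsup_congr hfactor,
    ENNReal.limsup_mul_of_tendsto hderiv.tendsto_edist_div_edist (by simpa using hs')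
      enorm_ne_top, ← hmap, ← limsup_comp, Real.enorm_eq_ofReal_abs]
  rfl

/-- Slope of a composition. -/
theorem statement0 (a b c d : ℝ) (f : ℝ → EReal) (s : ℝ → ℝ)
    (hf : LowerSemicontinuousOn f (Icc a b))
    (hs_mono : MonotoneOn s (Icc c d)) (hs_cont : ContinuousOn s (Icc c d))
    (hs_maps : MapsTo s (Icc c d) (Icc a b))
    (t : ℝ) (ht : t ∈ Ioo c d) (s' : ℝ) (hderiv : HasDerivAt s s' t) (hs' : s' ≠ 0)
    (hfin : ∃ r : ℝ, f (s t) = (r : EReal)) :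
    mSlopeOn (fun τ => f (s τ)) (Icc c d) t
      = mSlopeOn f (Icc a b) (s t) * ENNReal.ofReal |s'| :=
  statement0_general a b c d f s hs_mono hs_cont hs_maps t ht s' hderiv hs'
end

section
/- Let f : X → ℝ∪{±∞} be a lower-semicontinuous function on a metric space X and let γ : [a,b] → X be a 1-Lipschitz curve such that f∘γ is non-increasing and finite-valued. Then for almost every t ∈ (a,b) the derivative (f∘γ)'(t) exists and satisfies |(f∘γ)'(t)| ≤ |∇f|(γ(t)). -/
open Filter Topology MeasureTheory Set NNReal ENNReal Pointwise

/-! On `[a, b]` the function `f ∘ γ` is real-valued and antitone, so by Lebesgue's theorem it is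
differentiable at almost every interior point `t`, with derivative `d ≤ 0`. Its right difference
quotients `(f (γ t) - f (γ τ)) / (τ - t)` tend to `-d = |d|`, and as `γ` is 1-Lipschitz,
`τ - t ≥ d(γ t, γ τ)`: each of them is at most the slope quotient of `f` at `γ t` evaluated at
`γ τ → γ t`. Hence `|d| ≤ |∇f|(γ t)`. -/

lemma EReal.toENNReal'_coe (r : ℝ) : (r : EReal).toENNReal' = ENNReal.ofReal r := by
  simp [EReal.toENNReal']

lemma EReal.toENNReal'_eq_zero_of_nonpos {x : EReal} (hx : x ≤ 0) : x.toENNReal' = 0 := by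
  have hx_top : x ≠ ⊤ := ne_top_of_le_ne_top EReal.zero_ne_top hx
  simp [EReal.toENNReal', hx_top, EReal.toReal_nonpos hx]

section Slope

variable {X : Type*} [MetricSpace X]

/-- The slope quotient vanishes at the centre (`0 / 0 = 0` in `ℝ≥0∞`), so its limsup may be taken
along the full neighbourhood filter: a curve through `x` need not avoid `x` afterwards. -/
lemma limsup_nhds_le_mSlope (f : X → EReal) (x : X) :
    limsup (fun y => (f x - f y).toENNReal' / edist x y) (𝓝 x) ≤ mSlope f x := by
  have hcenter : (f x - f x).toENNReal' / edist x x ≤ 0 := by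
    rw [EReal.toENNReal'_eq_zero_of_nonpos EReal.sub_self_le_zero, ENNReal.zero_div]
  rw [← nhdsNE_sup_pure, limsup_sup_filter]
  exact sup_le le_rfl ((limsup_le_of_le (by isBoundedDefault) (eventually_pure.2 hcenter)).trans
    zero_le)

lemma ofReal_neg_le_mSlope_of_hasDerivWithinAt {f : X → EReal} {γ : ℝ → X} {g : ℝ → ℝ}
    {s : Set ℝ} {t d : ℝ} (hγ : LipschitzOnWith 1 γ s) (hs : s ∈ 𝓝[≥] t)
    (hfg : ∀ τ ∈ s, f (γ τ) = g τ) (hd : HasDerivWithinAt g d (Ioi t) t) :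
    ENNReal.ofReal (-d) ≤ mSlope f (γ t) := by
  set u : X → ℝ≥0∞ := fun x => (f (γ t) - f x).toENNReal' / edist (γ t) x
  have ht : t ∈ s := mem_of_mem_nhdsWithin self_mem_Ici hs
  have hslope : Tendsto (fun τ => -slope g t τ) (𝓝[>] t) (𝓝 (-d)) :=
    ((hasDerivWithinAt_iff_tendsto_slope' (lt_irrefl t)).1 hd).neg
  have hγt : Tendsto γ (𝓝[>] t) (𝓝 (γ t)) :=
    ((hγ.continuousOn t ht).mono_of_mem_nhdsWithin hs).mono_left
      (nhdsWithin_mono _ Ioi_subset_Ici_self)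
  have hquot : ∀ᶠ τ in 𝓝[>] t, ENNReal.ofReal (-slope g t τ) ≤ u (γ τ) := by
    filter_upwards [self_mem_nhdsWithin, nhdsWithin_mono _ Ioi_subset_Ici_self hs]
      with τ (hτt : t < τ) hτ
    have hdist : edist (γ t) (γ τ) ≤ ENNReal.ofReal (τ - t) := by
      simpa [edist_dist, Real.dist_eq, abs_of_neg (sub_neg.2 hτt)] using hγ ht hτ
    calc ENNReal.ofReal (-slope g t τ)
        = ENNReal.ofReal (g t - g τ) / ENNReal.ofReal (τ - t) := by
          rw [← ENNReal.ofReal_div_of_pos (sub_pos.2 hτt), slope_def_field, ← neg_div, neg_sub]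
      _ ≤ ENNReal.ofReal (g t - g τ) / edist (γ t) (γ τ) := ENNReal.div_le_div_left hdist _
      _ = u (γ τ) := by
          simp only [u, hfg t ht, hfg τ hτ, ← EReal.coe_sub, EReal.toENNReal'_coe]
  calc ENNReal.ofReal (-d)
      = limsup (fun τ => ENNReal.ofReal (-slope g t τ)) (𝓝[>] t) :=
        ((ENNReal.continuous_ofReal.tendsto _).comp hslope).limsup_eq.symm
    _ ≤ limsup (u ∘ γ) (𝓝[>] t) := limsup_le_limsup hquot
    _ ≤ limsup u (𝓝 (γ t)) := by
        rw [limsup_comp]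
        exact limsup_le_limsup_of_le hγt
    _ ≤ mSlope f (γ t) := limsup_nhds_le_mSlope f (γ t)

end Slope

lemma AntitoneOn.ae_differentiableAt_of_isOpen {g : ℝ → ℝ} {U : Set ℝ} (hg : AntitoneOn g U)
    (hU : IsOpen U) : ∀ᵐ t ∂volume.restrict U, DifferentiableAt ℝ g t := by
  filter_upwards [hg.neg.ae_differentiableWithinAt hU.measurableSet,
    ae_restrict_mem hU.measurableSet] with t hdiff ht
  simpa using (hdiff.differentiableAt (hU.mem_nhds ht)).neg

theorem statement1_general {X : Type*} [MetricSpace X] (f : X → EReal)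
    (a b : ℝ) (γ : ℝ → X) (hγ : LipschitzOnWith 1 γ (Icc a b))
    (hmono : AntitoneOn (fun t => f (γ t)) (Icc a b))
    (hfin : ∀ t ∈ Icc a b, ∃ r : ℝ, f (γ t) = (r : EReal)) :
    ∀ᵐ t ∂(volume.restrict (Ioo a b)), ∃ d : ℝ,
      HasDerivAt (fun τ => (f (γ τ)).toReal) d t ∧
      ENNReal.ofReal |d| ≤ mSlope f (γ t) := by
  set g : ℝ → ℝ := fun τ => (f (γ τ)).toReal
  have hfg : ∀ τ ∈ Icc a b, f (γ τ) = g τ := fun τ hτ => by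
    obtain ⟨r, hr⟩ := hfin τ hτ
    simp [g, hr]
  have hg : AntitoneOn g (Ioo a b) := fun s hs τ hτ hsτ => by
    have hIcc := Ioo_subset_Icc_self (a := a) (b := b)
    simpa [hfg s (hIcc hs), hfg τ (hIcc hτ)] using hmono (hIcc hs) (hIcc hτ) hsτ
  filter_upwards [hg.ae_differentiableAt_of_isOpen isOpen_Ioo,
    ae_restrict_mem measurableSet_Ioo] with t hdiff ht
  have hd := hdiff.hasDerivAt
  have hd_nonpos : deriv g t ≤ 0 :=
    hd.hasDerivWithinAt.nonpos_of_antitoneOn (isOpen_Ioo.preperfect t ht) hg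
  refine ⟨deriv g t, hd, ?_⟩
  rw [abs_of_nonpos hd_nonpos]
  exact ofReal_neg_le_mSlope_of_hasDerivWithinAt hγ
    (mem_nhdsWithin_of_mem_nhds (Icc_mem_nhds ht.1 ht.2)) hfg hd.hasDerivWithinAt

/-- Upper bound on the speed of descent along a 1-Lipschitz curve. -/
theorem statement1 {X : Type*} [MetricSpace X] (f : X → EReal)
    (hf : LowerSemicontinuous f)
    (a b : ℝ) (γ : ℝ → X) (hγ : LipschitzOnWith 1 γ (Icc a b))
    (hmono : AntitoneOn (fun t => f (γ t)) (Icc a b))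
    (hfin : ∀ t ∈ Icc a b, ∃ r : ℝ, f (γ t) = (r : EReal)) :
    ∀ᵐ t ∂(volume.restrict (Ioo a b)), ∃ d : ℝ,
      HasDerivAt (fun τ => (f (γ τ)).toReal) d t ∧
      ENNReal.ofReal |d| ≤ mSlope f (γ t) :=
  statement1_general f a b γ hγ hmono hfin
end

section
/- Let f : X → ℝ∪{±∞} be a lower-semicontinuous function on a complete metric space X. Assume that for some point x with f(x) finite there are constants α < f(x) and r, K > 0 so that whenever a point u satisfies α < f(u) ≤ f(x) and d(u,x) ≤ K, the inequality |∇f|(u) ≥ r holds. If in addition f(x) − α < K·r, then the sublevel set [f ≤ α] := {u ∈ X : f(u) ≤ α} is nonempty and d(x, [f ≤ α]) ≤ r⁻¹(f(x) − α). -/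
open Filter Topology MeasureTheory Set NNReal ENNReal Pointwise

/-!
Ekeland's variational principle, applied to `f` clamped to `[α, f x]` with parameter
`δ = (f x - α) / ρ` for some `ρ ∈ ((f x - α) / r, K]`, yields a point `u` with `d(x, u) ≤ ρ` at
which every nearby `v` satisfies `f u ≤ f v + δ d(u, v)`, so `|∇f|(u) ≤ δ < r`. The slope
hypothesis then rules out `α < f u`, hence `f u ≤ α`; letting `ρ` decrease to `(f x - α) / r`
gives the distance bound.
-/

section Ekeland

variable {X : Type*} [PseudoMetricSpace X]

def ekelandSet (g : X → ℝ) (δ : ℝ) (w : X) : Set X := {v | g v + δ * dist w v ≤ g w}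

variable {g : X → ℝ} {δ : ℝ}

theorem self_mem_ekelandSet (w : X) : w ∈ ekelandSet g δ w := by
  simp [ekelandSet]

theorem ekelandSet_subset (hδ : 0 ≤ δ) {v w : X} (hv : v ∈ ekelandSet g δ w) :
    ekelandSet g δ v ⊆ ekelandSet g δ w := fun z (hz : g z + δ * dist v z ≤ g v) => by
  have : δ * dist w z ≤ δ * dist w v + δ * dist v z := by
    rw [← mul_add]; exact mul_le_mul_of_nonneg_left (dist_triangle w v z) hδ
  exact show g z + δ * dist w z ≤ g w by linarith [show g v + δ * dist w v ≤ g w from hv]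

theorem isClosed_ekelandSet (hg : LowerSemicontinuous g) (w : X) :
    IsClosed (ekelandSet g δ w) := by
  have hdist : LowerSemicontinuous fun v => δ * dist w v :=
    ((continuous_const.dist continuous_id).const_mul δ).lowerSemicontinuous
  exact (hg.add hdist).isClosed_preimage (g w)

theorem mem_ekelandSet_of_le (hδ : 0 ≤ δ) {u : ℕ → X}
    (hu : ∀ n, u (n + 1) ∈ ekelandSet g δ (u n)) {n m : ℕ} (hnm : n ≤ m) :
    u m ∈ ekelandSet g δ (u n) := by
  induction m, hnm using Nat.le_induction with
  | base => exact self_mem_ekelandSet _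
  | succ m _ ih => exact ekelandSet_subset hδ ih (hu m)

theorem cauchySeq_of_mem_ekelandSet (hδ : 0 < δ) (hbdd : BddBelow (range g)) {u : ℕ → X}
    (hu : ∀ n, u (n + 1) ∈ ekelandSet g δ (u n)) : CauchySeq u := by
  have hdesc : ∀ {n m}, n ≤ m → g (u m) + δ * dist (u n) (u m) ≤ g (u n) :=
    fun hnm => mem_ekelandSet_of_le hδ.le hu hnm
  have hanti : Antitone fun n => g (u n) := fun n m hnm => by
    have := hdesc hnm; have := mul_nonneg hδ.le (dist_nonneg (x := u n) (y := u m))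
    linarith
  have hbdd' : BddBelow (range fun n => g (u n)) := hbdd.mono (range_comp_subset_range u g)
  have hlim := tendsto_atTop_ciInf hanti hbdd'
  rw [Metric.cauchySeq_iff']
  intro ε hε
  obtain ⟨N, hN⟩ := (hlim.eventually (gt_mem_nhds (lt_add_of_pos_right _ (mul_pos hδ hε)))).exists
  refine ⟨N, fun n hn => ?_⟩
  have hL : ⨅ i, g (u i) ≤ g (u n) := ciInf_le hbdd' n
  have := hdesc hn
  rw [dist_comm]
  exact lt_of_mul_lt_mul_left (by linarith) hδ.le

theorem LowerSemicontinuous.exists_ekeland_point [CompleteSpace X] (hg : LowerSemicontinuous g)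
    (hbdd : BddBelow (range g)) (hδ : 0 < δ) (x : X) :
    ∃ u ∈ ekelandSet g δ x, ∀ v, g u ≤ g v + δ * dist u v := by
  have hstep : ∀ (n : ℕ) (w : X), ∃ v ∈ ekelandSet g δ w,
      g v < sInf (g '' ekelandSet g δ w) + (1 / 2) ^ n := by
    intro n w
    have hne : (g '' ekelandSet g δ w).Nonempty := ⟨g w, w, self_mem_ekelandSet w, rfl⟩
    obtain ⟨_, ⟨v, hv, rfl⟩, hlt⟩ :=
      exists_lt_of_csInf_lt hne (lt_add_of_pos_right _ (by positivity : (0 : ℝ) < (1 / 2) ^ n))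
    exact ⟨v, hv, hlt⟩
  choose next hnext_mem hnext_lt using hstep
  let u : ℕ → X := fun n => Nat.rec x (fun n w => next n w) n
  have hu : ∀ n, u (n + 1) ∈ ekelandSet g δ (u n) := fun n => hnext_mem n (u n)
  obtain ⟨w, hw⟩ := cauchySeq_tendsto_of_complete (cauchySeq_of_mem_ekelandSet hδ hbdd hu)
  have hw_mem : ∀ n, w ∈ ekelandSet g δ (u n) := fun n =>
    (isClosed_ekelandSet hg _).mem_of_tendsto hw
      (eventually_atTop.2 ⟨n, fun _ hm => mem_ekelandSet_of_le hδ.le hu hm⟩)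
  refine ⟨w, hw_mem 0, fun v => ?_⟩
  -- Otherwise `v` lies in every `ekelandSet g δ (u n)`, so `g w ≤ g (u (n + 1)) < g v + 2⁻ⁿ`.
  by_contra! hv
  have hv_mem : v ∈ ekelandSet g δ w := hv.le
  obtain ⟨n, hn⟩ := exists_pow_lt_of_lt_one (sub_pos.2 hv) (by norm_num : (1 / 2 : ℝ) < 1)
  have h1 : sInf (g '' ekelandSet g δ (u n)) ≤ g v :=
    csInf_le (hbdd.mono (image_subset_range _ _))
      ⟨v, ekelandSet_subset hδ.le (hw_mem n) hv_mem, rfl⟩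
  have h2 : g w + δ * dist (u (n + 1)) w ≤ g (u (n + 1)) := hw_mem (n + 1)
  have h3 := hnext_lt n (u n)
  nlinarith [dist_nonneg (x := u (n + 1)) (y := w), dist_nonneg (x := w) (y := v)]

end Ekeland

namespace EReal

noncomputable def clampToReal (a b : ℝ) (t : EReal) : ℝ := ((t ⊓ b) ⊔ a).toReal

variable (a b : ℝ)

theorem coe_clampToReal (t : EReal) : (clampToReal a b t : EReal) = (t ⊓ b) ⊔ a :=
  coe_toReal (sup_lt_iff.2 ⟨inf_le_right.trans_lt (coe_lt_top b), coe_lt_top a⟩).ne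
    ((bot_lt_coe a).trans_le le_sup_right).ne'

theorem monotone_clampToReal : Monotone (clampToReal a b) := fun s t hst => by
  rw [← EReal.coe_le_coe_iff, coe_clampToReal, coe_clampToReal]
  exact sup_le_sup_right (inf_le_inf_right _ hst) _

theorem continuous_clampToReal : Continuous (clampToReal a b) := by
  rw [isEmbedding_coe.continuous_iff]
  simp only [Function.comp_def, coe_clampToReal]
  fun_prop

theorem toENNReal'_le_ofReal {x : EReal} {c : ℝ} (h : x ≤ c) :
    x.toENNReal' ≤ ENNReal.ofReal c := by
  rw [toENNReal', if_neg (ne_top_of_le_ne_top (coe_ne_top c) h)]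
  rcases eq_or_ne x ⊥ with rfl | hx
  · simp
  · exact ENNReal.ofReal_le_ofReal (toReal_le_toReal h hx (coe_ne_top c))

end EReal

theorem mSlope_le_of_eventually_le_add {X : Type*} [MetricSpace X] {f : X → EReal} {u : X}
    {δ : ℝ} (hδ : 0 ≤ δ) (h : ∀ᶠ v in 𝓝 u, f u ≤ f v + ↑(δ * dist u v)) :
    mSlope f u ≤ ENNReal.ofReal δ := by
  refine limsup_le_of_le (by isBoundedDefault) ?_
  filter_upwards [eventually_nhdsWithin_of_eventually_nhds h, self_mem_nhdsWithin]
    with v hv (hvu : v ≠ u)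
  have hd : edist u v = ENNReal.ofReal (dist u v) := edist_dist u v
  have hd0 : edist u v ≠ 0 := (edist_pos.2 hvu.symm).ne'
  calc (f u - f v).toENNReal' / edist u v
      ≤ ENNReal.ofReal (δ * dist u v) / edist u v :=
        ENNReal.div_le_div_right (EReal.toENNReal'_le_ofReal (EReal.sub_le_of_le_add' hv)) _
    _ = ENNReal.ofReal δ := by
        rw [ENNReal.ofReal_mul hδ, ← hd, ENNReal.mul_div_cancel_right hd0 (edist_ne_top u v)]

theorem exists_le_and_dist_le_of_le_mSlope {X : Type*} [MetricSpace X] [CompleteSpace X]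
    {f : X → EReal} (hf : LowerSemicontinuous f) {x : X} {fx α r ρ : ℝ}
    (hfx : f x = fx) (hα : α < fx) (hr : 0 < r)
    (hslope : ∀ u : X, (α : EReal) < f u → f u ≤ f x → dist u x ≤ ρ →
      ENNReal.ofReal r ≤ mSlope f u)
    (hρ : (fx - α) / r < ρ) :
    ∃ u, f u ≤ α ∧ dist x u ≤ ρ := by
  -- Ekeland's principle is applied to `f` clamped to `[α, f x]`, which is real-valued and
  -- coincides with `f` where the slope hypothesis is available.
  set g : X → ℝ := fun v => EReal.clampToReal α fx (f v)
  have hαfx : (α : EReal) ≤ fx := EReal.coe_le_coe_iff.2 hα.le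
  have hg : LowerSemicontinuous g :=
    (EReal.continuous_clampToReal α fx).comp_lowerSemicontinuous hf
      (EReal.monotone_clampToReal α fx)
  have hg_ge (v : X) : α ≤ g v := by
    rw [← EReal.coe_le_coe_iff, EReal.coe_clampToReal]; exact le_sup_right
  have hgx : g x = fx := by
    rw [← EReal.coe_eq_coe_iff, EReal.coe_clampToReal, hfx, inf_idem, sup_eq_left.2 hαfx]
  have hρ0 : 0 < ρ := (div_nonneg (sub_pos.2 hα).le hr.le).trans_lt hρ
  set δ := (fx - α) / ρ
  have hδ : 0 < δ := div_pos (sub_pos.2 hα) hρ0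
  have hδr : δ < r := by
    rw [div_lt_iff₀ hρ0]; rwa [div_lt_iff₀ hr, mul_comm] at hρ
  obtain ⟨u, hux, hu⟩ := hg.exists_ekeland_point ⟨α, forall_mem_range.2 hg_ge⟩ hδ x
  have hux' : g u + δ * dist x u ≤ fx := hgx ▸ hux
  have hdist : dist x u ≤ ρ := by
    refine le_of_mul_le_mul_left ?_ hδ
    rw [div_mul_cancel₀ _ hρ0.ne']
    linarith [hg_ge u]
  refine ⟨u, not_lt.1 fun hαu => ?_, hdist⟩
  have hufx : f u ≤ f x := by
    by_contra! hxu
    have hgu : g u = fx := by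
      rw [← EReal.coe_eq_coe_iff, EReal.coe_clampToReal, inf_eq_right.2 (hfx ▸ hxu.le),
        sup_eq_left.2 hαfx]
    have hux : u = x := (dist_le_zero.1 (nonpos_of_mul_nonpos_right (by linarith) hδ)).symm
    exact hxu.ne (hux ▸ rfl)
  have hfu : f u = g u := by
    rw [EReal.coe_clampToReal, inf_eq_left.2 (hfx ▸ hufx), sup_eq_left.2 hαu.le]
  have hlocal : ∀ᶠ v in 𝓝 u, f u ≤ f v + ↑(δ * dist u v) := by
    filter_upwards [hf u α hαu] with v hv
    have hgv : (g v : EReal) ≤ f v := by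
      rw [EReal.coe_clampToReal]; exact sup_le inf_le_left hv.le
    calc f u = g u := hfu
      _ ≤ ((g v + δ * dist u v : ℝ) : EReal) := EReal.coe_le_coe_iff.2 (hu v)
      _ = g v + ↑(δ * dist u v) := EReal.coe_add _ _
      _ ≤ f v + ↑(δ * dist u v) := add_le_add_left hgv _
  have hrδ := (hslope u hαu hufx (dist_comm u x ▸ hdist)).trans
    (mSlope_le_of_eventually_le_add hδ.le hlocal)
  exact hδr.not_ge ((ENNReal.ofReal_le_ofReal_iff hδ.le).1 hrδ)

theorem statement2_general {X : Type*} [MetricSpace X] [CompleteSpace X]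
    (f : X → EReal) (hf : LowerSemicontinuous f)
    (x : X) (fx : ℝ) (hfx : f x = (fx : EReal))
    (α r K : ℝ) (hα : α < fx) (hr : 0 < r)
    (hslope : ∀ u : X, (α : EReal) < f u → f u ≤ f x → dist u x ≤ K →
      ENNReal.ofReal r ≤ mSlope f u)
    (hgap : fx - α < K * r) :
    {u : X | f u ≤ (α : EReal)}.Nonempty ∧
      Metric.infDist x {u : X | f u ≤ (α : EReal)} ≤ r⁻¹ * (fx - α) := by
  have hK : (fx - α) / r < K := (div_lt_iff₀ hr).2 hgap
  have key (ρ : ℝ) (hρ : (fx - α) / r < ρ) : ∃ u, f u ≤ α ∧ dist x u ≤ min ρ K :=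
    exists_le_and_dist_le_of_le_mSlope hf hfx hα hr
      (fun u hαu hux hdist => hslope u hαu hux (hdist.trans (min_le_right ρ K))) (lt_min hρ hK)
  set S := {u : X | f u ≤ (α : EReal)}
  obtain ⟨u, hu, -⟩ := key K hK
  refine ⟨⟨u, hu⟩, ?_⟩
  rw [inv_mul_eq_div]
  refine le_of_forall_gt_imp_ge_of_dense fun ρ hρ => ?_
  obtain ⟨v, hv : v ∈ S, hxv⟩ := key ρ hρ
  exact (Metric.infDist_le_dist_of_mem hv).trans (hxv.trans (min_le_left ρ K))

/-- Error bound. -/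
theorem statement2 {X : Type*} [MetricSpace X] [CompleteSpace X]
    (f : X → EReal) (hf : LowerSemicontinuous f)
    (x : X) (fx : ℝ) (hfx : f x = (fx : EReal))
    (α r K : ℝ) (hα : α < fx) (hr : 0 < r) (hK : 0 < K)
    (hslope : ∀ u : X, (α : EReal) < f u → f u ≤ f x → dist u x ≤ K →
      ENNReal.ofReal r ≤ mSlope f u)
    (hgap : fx - α < K * r) :
    {u : X | f u ≤ (α : EReal)}.Nonempty ∧
      Metric.infDist x {u : X | f u ≤ (α : EReal)} ≤ r⁻¹ * (fx - α) :=
  statement2_general f hf x fx hfx α r K hα hr hslope hgap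
end

section
/- Let f : X → ℝ∪{±∞} be a lower-semicontinuous function on a metric space X and let γ : [a,b] → X be a curve of near-maximal slope for f. Suppose in addition that the function t ↦ |∇f|⁻(γ(t)) is integrable on [a,b] and that 1/(|∇f|⁻(γ(t))) is finite for almost every t ∈ [a,b]. Then there exists a reparametrization of γ that is a near-steepest descent curve for f. -/
open Filter Topology MeasureTheory Set NNReal ENNReal Pointwise

/-!
Along the curve the speed `g = |∇f|⁻ ∘ γ` coincides a.e. with the metric derivative, is
integrable and a.e. positive. The arclength `σ t = ∫ a..t, g` is therefore a strictly increasing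
absolutely continuous bijection (after extending `g` by `1` off `[a, b]`), and the pushforward of
Lebesgue measure under its inverse `s` is `g dt`; hence `s` transports null sets to null sets and
`s' = 1 / (g ∘ s)` is integrable, so `s` is absolutely continuous. Since an absolutely continuous
curve satisfies `d(γ p, γ q) ≤ ∫ p..q, ‖γ̇‖`, the curve `γ ∘ s` has unit speed and is 1-Lipschitz,
and the chain rule gives `|(f ∘ γ ∘ s)'| = |(f ∘ γ)'| / g ≥ g² / g = |∇f|⁻ ∘ γ ∘ s`.
-/

theorem MeasureTheory.LocallyIntegrable.intervalIntegrable {E : Type*} [NormedAddCommGroup E]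
    {f : ℝ → E} (hf : LocallyIntegrable f volume) (a b : ℝ) : IntervalIntegrable f volume a b :=
  (hf.integrableOn_isCompact isCompact_uIcc).intervalIntegrable

section DistComparison

variable {X Y : Type*} [PseudoMetricSpace X] [PseudoMetricSpace Y] {a b : ℝ}

theorem AbsolutelyContinuousOnInterval.of_dist_le {F : ℝ → X} {G : ℝ → Y}
    (hF : AbsolutelyContinuousOnInterval F a b)
    (h : ∀ x ∈ uIcc a b, ∀ y ∈ uIcc a b, dist (G x) (G y) ≤ dist (F x) (F y)) :
    AbsolutelyContinuousOnInterval G a b := by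
  refine squeeze_zero' (Eventually.of_forall fun E => Finset.sum_nonneg fun i _ => dist_nonneg)
    ?_ hF
  filter_upwards [mem_inf_of_right (mem_principal_self _)] with E hE
  exact Finset.sum_le_sum fun i hi => h _ (hE.1 i hi).1 _ (hE.1 i hi).2

theorem ContinuousOn.of_dist_le {α : Type*} [TopologicalSpace α] {s : Set α} {F : α → X}
    {G : α → Y} (hF : ContinuousOn F s)
    (h : ∀ x ∈ s, ∀ y ∈ s, dist (G x) (G y) ≤ dist (F x) (F y)) : ContinuousOn G s := by
  intro x hx
  rw [ContinuousWithinAt, tendsto_iff_dist_tendsto_zero]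
  exact squeeze_zero' (Eventually.of_forall fun _ => dist_nonneg)
    (eventually_nhdsWithin_of_forall fun y hy => h y hy x hx)
    (tendsto_iff_dist_tendsto_zero.mp (hF x hx))

end DistComparison

section Curves

variable {X : Type*} [MetricSpace X] {γ : ℝ → X} {a b : ℝ}

theorem AbsContOn.exists_dist_le_dist (hγ : AbsContOn γ a b) (hab : a ≤ b) :
    ∃ M : ℝ → ℝ, AbsolutelyContinuousOnInterval M a b ∧
      ∀ x ∈ Icc a b, ∀ y ∈ Icc a b, dist (γ x) (γ y) ≤ dist (M x) (M y) := by
  obtain ⟨m, hm, hdist⟩ := hγ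
  have hm' : IntervalIntegrable m volume a b := (uIcc_of_le hab ▸ hm).intervalIntegrable
  refine ⟨fun x => ∫ τ in a..x, m τ,
    hm'.absolutelyContinuousOnInterval_intervalIntegral left_mem_uIcc, ?_⟩
  have hle : ∀ x ∈ Icc a b, ∀ y ∈ Icc a b, x ≤ y →
      dist (γ x) (γ y) ≤ (∫ τ in a..y, m τ) - ∫ τ in a..x, m τ := fun x hx y hy hxy => by
    rw [intervalIntegral.integral_interval_sub_left
      (hm.mono_set (uIcc_subset_Icc (left_mem_Icc.2 hab) hy)).intervalIntegrable
      (hm.mono_set (uIcc_subset_Icc (left_mem_Icc.2 hab) hx)).intervalIntegrable]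
    exact hdist x y hx.1 hxy hy.2
  intro x hx y hy
  rw [Real.dist_eq]
  rcases le_total x y with hxy | hyx
  · exact (hle x hx y hy hxy).trans (by rw [abs_sub_comm]; exact le_abs_self _)
  · rw [dist_comm]
    exact (hle y hy x hx hyx).trans (le_abs_self _)

theorem AbsContOn.absolutelyContinuousOnInterval (hγ : AbsContOn γ a b) (hab : a ≤ b) :
    AbsolutelyContinuousOnInterval γ a b := by
  obtain ⟨M, hM, hle⟩ := hγ.exists_dist_le_dist hab
  exact hM.of_dist_le (by rwa [uIcc_of_le hab])

theorem AbsContOn.continuousOn (hγ : AbsContOn γ a b) (hab : a ≤ b) :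
    ContinuousOn γ (Icc a b) := by
  obtain ⟨M, hM, hle⟩ := hγ.exists_dist_le_dist hab
  exact (hM.continuousOn.mono Icc_subset_uIcc).of_dist_le hle

theorem HasMetricDerivAt.le_of_hasDerivAt_dist {t m φ' : ℝ} (hγ : HasMetricDerivAt γ t m) (z : X)
    (hφ : HasDerivAt (fun s => dist z (γ s)) φ' t) : φ' ≤ m := by
  have hslope := (hasDerivAt_iff_tendsto_slope.mp hφ).mono_left (nhdsGT_le_nhdsNE t)
  refine le_of_tendsto_of_tendsto hslope (hγ.mono_left (nhdsGT_le_nhdsNE t)) ?_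
  filter_upwards [self_mem_nhdsWithin] with s (hs : t < s)
  rw [slope_def_field, abs_of_pos (sub_pos.2 hs), dist_comm (γ s)]
  gcongr
  linarith [dist_triangle z (γ t) (γ s)]

theorem dist_le_integral_of_hasMetricDerivAt {g : ℝ → ℝ} (hab : a ≤ b)
    (hγ : AbsolutelyContinuousOnInterval γ a b) (hg : IntervalIntegrable g volume a b)
    (hd : ∀ᵐ t ∂volume.restrict (Icc a b), HasMetricDerivAt γ t (g t)) :
    dist (γ a) (γ b) ≤ ∫ t in a..b, g t := by
  set φ : ℝ → ℝ := fun t => dist (γ a) (γ t)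
  have hφ : AbsolutelyContinuousOnInterval φ a b :=
    hγ.of_dist_le fun x _ y _ => dist_dist_dist_le_right _ _ _
  have hderiv : deriv φ ≤ᵐ[volume.restrict (Icc a b)] g := by
    filter_upwards [ae_restrict_of_ae hφ.ae_differentiableAt, hd,
      ae_restrict_mem measurableSet_Icc] with t hdiff hmd ht
    exact hmd.le_of_hasDerivAt_dist _ (hdiff (uIcc_of_le hab ▸ ht)).hasDerivAt
  calc dist (γ a) (γ b) = φ b - φ a := by simp [φ]
    _ = ∫ t in a..b, deriv φ t := hφ.integral_deriv_eq_sub.symm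
    _ ≤ ∫ t in a..b, g t :=
      intervalIntegral.integral_mono_ae_restrict hab hφ.intervalIntegrable_deriv hg hderiv

end Curves

section Speed

variable {X : Type*} [MetricSpace X] {γ : ℝ → X} {a b : ℝ} {v : ℝ → ℝ≥0∞}

theorem aemeasurable_of_hasMetricDerivAt (hab : a ≤ b) (hγ : ContinuousOn γ (Icc a b))
    (hmd : ∀ᵐ t ∂volume.restrict (Icc a b), ∃ m, HasMetricDerivAt γ t m ∧ ENNReal.ofReal m = v t) :
    AEMeasurable v (volume.restrict (Icc a b)) := by
  -- Clamping to `[a, b]` makes the difference quotients continuous in `t`, and leaves them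
  -- unchanged for small `h > 0` at interior points.
  set γc : ℝ → X := fun t => γ (projIcc a b hab t)
  have hγc : Continuous γc :=
    hγ.comp_continuous (continuous_subtype_val.comp continuous_projIcc) fun t =>
      (projIcc a b hab t).2
  refine aemeasurable_of_tendsto_metrizable_ae (𝓝[>] (0 : ℝ))
    (f := fun h t => ENNReal.ofReal (dist (γc (t + h)) (γc t) / h)) (fun h => ?_) ?_
  · exact (((hγc.comp (continuous_add_const h)).dist hγc).div_const h).measurable.ennreal_ofReal
      |>.aemeasurable
  rw [← Measure.restrict_congr_set Ioo_ae_eq_Icc] at hmd ⊢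
  filter_upwards [hmd, ae_restrict_mem measurableSet_Ioo] with t ⟨m, hm, hmv⟩ ht
  have hshift : Tendsto (fun h => t + h) (𝓝[>] 0) (𝓝[≠] t) := by
    refine tendsto_nhdsWithin_of_tendsto_nhds_of_eventually_within _ ?_ ?_
    · simpa using ((continuous_const_add t).tendsto 0).mono_left nhdsWithin_le_nhds
    · filter_upwards [self_mem_nhdsWithin] with h (hh : 0 < h)
      simpa using hh.ne'
  have hclamp : (fun h => dist (γ (t + h)) (γ t) / |t + h - t|)
      =ᶠ[𝓝[>] 0] fun h => dist (γc (t + h)) (γc t) / h := by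
    filter_upwards [Ioo_mem_nhdsGT (sub_pos.2 ht.2)] with h hh
    have hth : t + h ∈ Icc a b := ⟨by linarith [ht.1, hh.1], by linarith [hh.2]⟩
    simp [γc, projIcc_of_mem hab hth, projIcc_of_mem hab (Ioo_subset_Icc_self ht),
      abs_of_pos hh.1]
  rw [← hmv]
  exact (ENNReal.continuous_ofReal.tendsto m).comp ((hm.comp hshift).congr' hclamp)

theorem exists_speed_of_hasMetricDerivAt (hab : a ≤ b) (hγ : ContinuousOn γ (Icc a b))
    (hmd : ∀ᵐ t ∂volume.restrict (Icc a b), ∃ m, HasMetricDerivAt γ t m ∧ ENNReal.ofReal m = v t)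
    (hint : ∫⁻ t in Icc a b, v t ≠ ⊤) (hpos : ∀ᵐ t ∂volume.restrict (Icc a b), v t ≠ 0) :
    ∃ g : ℝ → ℝ, Measurable g ∧ LocallyIntegrable g volume ∧ (∀ᵐ t, 0 < g t) ∧
      (∀ t ∉ Icc a b, g t = 1) ∧
      ∀ᵐ t ∂volume.restrict (Icc a b), ENNReal.ofReal (g t) = v t ∧ HasMetricDerivAt γ t (g t) := by
  obtain ⟨w, hw, hvw⟩ := aemeasurable_of_hasMetricDerivAt hab hγ hmd
  have hw_int : IntegrableOn (fun t => (w t).toReal) (Icc a b) :=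
    integrable_toReal_of_lintegral_ne_top hw.aemeasurable (by rwa [← lintegral_congr_ae hvw])
  set g : ℝ → ℝ := (Icc a b).indicator (fun t => (w t).toReal) + (Icc a b)ᶜ.indicator 1
  have hg_in : ∀ t ∈ Icc a b, g t = (w t).toReal := fun t ht => by
    simp [g, ht]
  have hg_out : ∀ t ∉ Icc a b, g t = 1 := fun t ht => by
    simp [g, ht]
  have hspeed : ∀ᵐ t ∂volume.restrict (Icc a b),
      0 < g t ∧ ENNReal.ofReal (g t) = v t ∧ HasMetricDerivAt γ t (g t) := by
    filter_upwards [hmd, hpos, hvw, ae_restrict_mem measurableSet_Icc]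
      with t ⟨m, hm, hmv⟩ hv0 hvw ht
    have hm0 : 0 < m := by
      by_contra! h
      exact hv0 (by rw [← hmv, ENNReal.ofReal_of_nonpos h])
    have hgm : g t = m := by rw [hg_in t ht, ← hvw, ← hmv, ENNReal.toReal_ofReal hm0.le]
    exact ⟨hgm ▸ hm0, hgm ▸ hmv, hgm ▸ hm⟩
  refine ⟨g, ?_, ?_, ?_, hg_out, hspeed.mono fun t ht => ht.2⟩
  · exact (hw.ennreal_toReal.indicator measurableSet_Icc).add
      (measurable_const.indicator measurableSet_Icc.compl)
  · exact (hw_int.integrable_indicator measurableSet_Icc).locallyIntegrable.add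
      (locallyIntegrable_const 1 |>.indicator measurableSet_Icc.compl)
  · have hin := (ae_restrict_iff' measurableSet_Icc).mp (hspeed.mono fun t ht => ht.1)
    filter_upwards [hin] with t ht
    by_cases h : t ∈ Icc a b
    · exact ht h
    · simp [hg_out t h]

end Speed

theorem OrderIso.mapsTo_symm_Icc {α β : Type*} [Preorder α] [Preorder β] (e : α ≃o β) (a b : α) :
    MapsTo e.symm (Icc (e a) (e b)) (Icc a b) := fun _ hτ =>
  ⟨e.le_symm_apply.mpr hτ.1, e.symm_apply_le.mpr hτ.2⟩

theorem le_abs_mul_inv_of_ofReal_sq_le {x d : ℝ} (hx : 0 < x)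
    (h : ENNReal.ofReal x ^ 2 ≤ ENNReal.ofReal (-d)) : x ≤ |d * x⁻¹| := by
  rw [← ENNReal.ofReal_pow hx.le, ENNReal.ofReal_le_ofReal_iff'] at h
  rw [abs_mul, abs_inv, abs_of_pos hx, le_mul_inv_iff₀ hx]
  rcases h with h | h
  · nlinarith [neg_le_abs d]
  · nlinarith

section PrimitiveInverse

variable {g : ℝ → ℝ} {a : ℝ}

theorem strictMono_primitive (hg : LocallyIntegrable g volume) (hpos : ∀ᵐ t, 0 < g t) :
    StrictMono fun t => ∫ x in a..t, g x := by
  intro p q hpq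
  rw [← sub_pos, intervalIntegral.integral_interval_sub_left (hg.intervalIntegrable a q)
    (hg.intervalIntegrable a p)]
  refine (intervalIntegral.integral_pos_iff_support_of_nonneg_ae (hpos.mono fun t ht => ht.le)
    (hg.intervalIntegrable p q)).mpr ⟨hpq, ?_⟩
  have hsupp : Ioc p q =ᵐ[volume] (Function.support g ∩ Ioc p q : Set ℝ) := by
    filter_upwards [hpos] with t ht
    change (t ∈ Ioc p q) = (t ∈ Function.support g ∩ Ioc p q)
    simp [ht.ne']
  rw [← measure_congr hsupp, Real.volume_Ioc]
  exact ENNReal.ofReal_pos.mpr (sub_pos.mpr hpq)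

theorem exists_orderIso_eq_primitive {b : ℝ} (hg : LocallyIntegrable g volume)
    (hpos : ∀ᵐ t, 0 < g t) (hone : ∀ t ∉ Icc a b, g t = 1) :
    ∃ e : ℝ ≃o ℝ, ∀ t, e t = ∫ x in a..t, g x := by
  set σ : ℝ → ℝ := fun t => ∫ x in a..t, g x
  have hσ_sub : ∀ s t, σ t - σ s = ∫ x in s..t, g x := fun s t =>
    intervalIntegral.integral_interval_sub_left (hg.intervalIntegrable a t)
      (hg.intervalIntegrable a s)
  have hright : ∀ t ≥ b, σ t = σ b + (t - b) := fun t ht => by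
    rw [← sub_eq_iff_eq_add', hσ_sub]
    calc ∫ x in b..t, g x = ∫ _ in b..t, (1 : ℝ) := by
          refine intervalIntegral.integral_congr_ae (Eventually.of_forall fun x hx => hone x ?_)
          rw [uIoc_of_le ht] at hx
          exact fun h => hx.1.not_ge h.2
      _ = t - b := by simp
  have hleft : ∀ t ≤ a, σ t = t - a := fun t ht => by
    calc σ t = ∫ _ in a..t, (1 : ℝ) := by
          refine intervalIntegral.integral_congr_ae ?_
          filter_upwards [Measure.ae_ne volume a] with x hxa hx
          rw [uIoc_of_ge ht] at hx
          exact hone x fun h => hxa (le_antisymm hx.2 h.1)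
      _ = t - a := by simp
  have hsurj : Function.Surjective σ := by
    refine (intervalIntegral.continuous_primitive hg.intervalIntegrable a).surjective ?_ ?_
    · refine Tendsto.congr' (eventually_ge_atTop b |>.mono fun t ht => (hright t ht).symm) ?_
      exact tendsto_atTop_add_const_left _ _ (tendsto_atTop_add_const_right _ _ tendsto_id)
    · refine Tendsto.congr' (eventually_le_atBot a |>.mono fun t ht => (hleft t ht).symm) ?_
      exact tendsto_atBot_add_const_right _ _ tendsto_id
  exact ⟨StrictMono.orderIsoOfSurjective σ (strictMono_primitive hg hpos) hsurj, fun t => rfl⟩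

variable (e : ℝ ≃o ℝ) (hg : LocallyIntegrable g volume) (he : ∀ t, e t = ∫ x in a..t, g x)
include hg he

theorem map_symm_volume_eq_withDensity (hnn : 0 ≤ᵐ[volume] g) :
    volume.map e.symm = volume.withDensity fun t => ENNReal.ofReal (g t) := by
  have hpre : ∀ x y, e.symm ⁻¹' Ioc x y = Ioc (e x) (e y) := fun x y => by
    simp [OrderIso.preimage_Ioc]
  refine Measure.ext_of_Ioc' _ _ (fun x y _ => ?_) fun x y hxy => ?_
  · rw [Measure.map_apply e.symm.continuous.measurable measurableSet_Ioc, hpre]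
    exact measure_Ioc_lt_top.ne
  rw [Measure.map_apply e.symm.continuous.measurable measurableSet_Ioc, hpre, Real.volume_Ioc,
    withDensity_apply _ measurableSet_Ioc, he, he,
    intervalIntegral.integral_interval_sub_left (hg.intervalIntegrable a y)
      (hg.intervalIntegrable a x), intervalIntegral.integral_of_le hxy.le]
  exact ofReal_integral_eq_lintegral_ofReal (hg.integrableOn_isCompact isCompact_Icc
    |>.mono_set Ioc_subset_Icc_self) (ae_restrict_of_ae hnn)

theorem ae_comp_symm (hpos : ∀ᵐ t, 0 < g t) {P : ℝ → Prop} (hP : ∀ᵐ t, P t) :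
    ∀ᵐ τ, P (e.symm τ) := by
  refine ae_of_ae_map e.symm.continuous.measurable.aemeasurable ?_
  rw [map_symm_volume_eq_withDensity e hg he (hpos.mono fun t ht => ht.le)]
  exact (withDensity_absolutelyContinuous _ _).ae_le hP

theorem lintegral_inv_comp_symm (hmeas : Measurable g) (hpos : ∀ᵐ t, 0 < g t) (v u : ℝ) :
    ∫⁻ τ in Ioc v u, ENNReal.ofReal (g (e.symm τ))⁻¹ = ENNReal.ofReal (e.symm u - e.symm v) := by
  have hpre : e.symm ⁻¹' Ioc (e.symm v) (e.symm u) = Ioc v u := by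
    simp [OrderIso.preimage_Ioc]
  have hinv : Measurable fun t => ENNReal.ofReal (g t)⁻¹ := hmeas.inv.ennreal_ofReal
  calc ∫⁻ τ in Ioc v u, ENNReal.ofReal (g (e.symm τ))⁻¹
      = ∫⁻ t in Ioc (e.symm v) (e.symm u), ENNReal.ofReal (g t)⁻¹ ∂volume.map e.symm := by
        rw [setLIntegral_map measurableSet_Ioc hinv e.symm.continuous.measurable, hpre]
    _ = ∫⁻ t in Ioc (e.symm v) (e.symm u), ENNReal.ofReal (g t) * ENNReal.ofReal (g t)⁻¹ := by
        rw [map_symm_volume_eq_withDensity e hg he (hpos.mono fun t ht => ht.le),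
          setLIntegral_withDensity_eq_setLIntegral_mul _ hmeas.ennreal_ofReal hinv
            measurableSet_Ioc]
        rfl
    _ = ∫⁻ _ in Ioc (e.symm v) (e.symm u), 1 := by
        refine lintegral_congr_ae (ae_restrict_of_ae (hpos.mono fun t ht => ?_))
        dsimp only
        rw [← ENNReal.ofReal_mul ht.le, mul_inv_cancel₀ ht.ne', ENNReal.ofReal_one]
    _ = ENNReal.ofReal (e.symm u - e.symm v) := by
        rw [setLIntegral_one, Real.volume_Ioc]

theorem absContOn_symm (hmeas : Measurable g) (hpos : ∀ᵐ t, 0 < g t) (c d : ℝ) :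
    AbsContOn e.symm c d := by
  have hnn : ∀ᵐ τ, 0 ≤ (g (e.symm τ))⁻¹ :=
    ae_comp_symm e hg he hpos (hpos.mono fun t ht => inv_nonneg.mpr ht.le)
  have hm : Measurable fun τ => (g (e.symm τ))⁻¹ := (hmeas.comp e.symm.continuous.measurable).inv
  have hint : ∀ v u, IntegrableOn (fun τ => (g (e.symm τ))⁻¹) (Ioc v u) := fun v u =>
    ⟨hm.aestronglyMeasurable, (hasFiniteIntegral_iff_ofReal (ae_restrict_of_ae hnn)).mpr
      (lintegral_inv_comp_symm e hg he hmeas hpos v u ▸ ENNReal.ofReal_lt_top)⟩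
  refine ⟨fun τ => (g (e.symm τ))⁻¹, (hint c d).congr_set_ae Ioc_ae_eq_Icc.symm,
    fun v u _ hvu _ => ?_⟩
  rw [intervalIntegral.integral_of_le hvu, integral_eq_lintegral_of_nonneg_ae
    (ae_restrict_of_ae hnn) hm.aestronglyMeasurable, lintegral_inv_comp_symm e hg he hmeas hpos,
    ENNReal.toReal_ofReal (sub_nonneg.mpr (e.symm.monotone hvu)), Real.dist_eq, abs_sub_comm,
    abs_of_nonneg (sub_nonneg.mpr (e.symm.monotone hvu))]

theorem ae_exists_hasDerivAt_comp_symm {b : ℝ} {φ : ℝ → ℝ} {v : ℝ → ℝ≥0∞}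
    (hpos : ∀ᵐ t, 0 < g t) (hv : ∀ᵐ t ∂volume.restrict (Icc a b), ENNReal.ofReal (g t) = v t)
    (hφ : ∀ᵐ t ∂volume.restrict (Icc a b), ∃ d, HasDerivAt φ d t ∧ v t ^ 2 ≤ ENNReal.ofReal (-d)) :
    ∀ᵐ τ ∂volume.restrict (Icc (e a) (e b)),
      ∃ d, HasDerivAt (fun τ => φ (e.symm τ)) d τ ∧ v (e.symm τ) ≤ ENNReal.ofReal |d| := by
  have hgood : ∀ᵐ t, t ∈ Icc a b → 0 < g t ∧ HasDerivAt e (g t) t ∧ ENNReal.ofReal (g t) = v t ∧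
      ∃ d, HasDerivAt φ d t ∧ v t ^ 2 ≤ ENNReal.ofReal (-d) := by
    rw [← ae_restrict_iff' measurableSet_Icc]
    filter_upwards [ae_restrict_of_ae hpos,
      ae_restrict_of_ae (LocallyIntegrable.ae_hasDerivAt_integral hg), hv, hφ]
      with t hpos hderiv hvt hφt
    exact ⟨hpos, funext he ▸ hderiv a, hvt, hφt⟩
  rw [ae_restrict_iff' measurableSet_Icc]
  filter_upwards [ae_comp_symm e hg he hpos hgood] with τ hτ hτmem
  obtain ⟨hpos, hderiv, hvτ, d, hd, hdesc⟩ := hτ (e.mapsTo_symm_Icc a b hτmem)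
  have hsymm : HasDerivAt e.symm (g (e.symm τ))⁻¹ τ :=
    hderiv.of_local_left_inverse e.symm.continuous.continuousAt hpos.ne'
      (Eventually.of_forall e.apply_symm_apply)
  refine ⟨d * (g (e.symm τ))⁻¹, hd.comp τ hsymm, ?_⟩
  rw [← hvτ] at hdesc ⊢
  exact ENNReal.ofReal_le_ofReal (le_abs_mul_inv_of_ofReal_sq_le hpos hdesc)

theorem lipschitzOnWith_comp_symm_of_hasMetricDerivAt {X : Type*} [MetricSpace X] {γ : ℝ → X}
    {b : ℝ} (hγ : AbsolutelyContinuousOnInterval γ a b)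
    (hd : ∀ᵐ t ∂volume.restrict (Icc a b), HasMetricDerivAt γ t (g t)) :
    LipschitzOnWith 1 (fun τ => γ (e.symm τ)) (Icc (e a) (e b)) := by
  have hmem := e.mapsTo_symm_Icc a b
  have key : ∀ x ∈ Icc (e a) (e b), ∀ y ∈ Icc (e a) (e b), x ≤ y →
      dist (γ (e.symm x)) (γ (e.symm y)) ≤ y - x := by
    intro x hx y hy hxy
    calc dist (γ (e.symm x)) (γ (e.symm y))
        ≤ ∫ t in e.symm x..e.symm y, g t :=
          dist_le_integral_of_hasMetricDerivAt (e.symm.monotone hxy)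
            (hγ.mono (uIcc_subset_uIcc (Icc_subset_uIcc (hmem hx)) (Icc_subset_uIcc (hmem hy))))
            (hg.intervalIntegrable _ _)
            (ae_restrict_of_ae_restrict_of_subset (Icc_subset_Icc (hmem hx).1 (hmem hy).2) hd)
      _ = y - x := by
        rw [← intervalIntegral.integral_interval_sub_left (hg.intervalIntegrable a _)
          (hg.intervalIntegrable a _), ← he, ← he, e.apply_symm_apply, e.apply_symm_apply]
  refine LipschitzOnWith.of_dist_le_mul fun x hx y hy => ?_
  rw [NNReal.coe_one, one_mul, Real.dist_eq]
  rcases le_total x y with hxy | hyx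
  · exact (key x hx y hy hxy).trans (by rw [abs_sub_comm]; exact le_abs_self _)
  · rw [dist_comm]
    exact (key y hy x hx hyx).trans (le_abs_self _)

end PrimitiveInverse

theorem statement5_general {X : Type*} [MetricSpace X] (f : X → EReal)
    (a b : ℝ) (hab : a ≤ b) (γ : ℝ → X)
    (hγ : NearMaximalSlopeCurve f a b γ)
    (hint : (∫⁻ t in Icc a b, limSlope f (γ t)) ≠ ⊤)
    (hfin : ∀ᵐ t ∂(volume.restrict (Icc a b)), limSlope f (γ t) ≠ 0) :
    ∃ (c d : ℝ) (s : ℝ → ℝ), c ≤ d ∧ MonotoneOn s (Icc c d) ∧ AbsContOn s c d ∧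
      s c = a ∧ s d = b ∧ NearSteepestDescentCurve f c d (fun τ => γ (s τ)) := by
  obtain ⟨hAC, hmd, hanti, hdesc⟩ := hγ
  obtain ⟨g, hg_meas, hg_int, hg_pos, hg_one, hg_speed⟩ :=
    exists_speed_of_hasMetricDerivAt (v := fun t => limSlope f (γ t)) hab (hAC.continuousOn hab)
      hmd hint hfin
  obtain ⟨e, he⟩ := exists_orderIso_eq_primitive hg_int hg_pos hg_one
  have hmem := e.mapsTo_symm_Icc a b
  exact ⟨e a, e b, e.symm, e.monotone hab, e.symm.monotone.monotoneOn _,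
    absContOn_symm e hg_int he hg_meas hg_pos _ _, e.symm_apply_apply a, e.symm_apply_apply b,
    lipschitzOnWith_comp_symm_of_hasMetricDerivAt e hg_int he
      (hAC.absolutelyContinuousOnInterval hab) (hg_speed.mono fun t ht => ht.2),
    fun x hx y hy hxy => hanti (hmem hx) (hmem hy) (e.symm.monotone hxy),
    ae_exists_hasDerivAt_comp_symm e hg_int he hg_pos (hg_speed.mono fun t ht => ht.1) hdesc⟩

/-- From curves of near-maximal slope to near-steepest descent curves. -/
theorem statement5 {X : Type*} [MetricSpace X] (f : X → EReal)
    (hf : LowerSemicontinuous f)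
    (a b : ℝ) (hab : a ≤ b) (γ : ℝ → X)
    (hγ : NearMaximalSlopeCurve f a b γ)
    (hint : (∫⁻ t in Icc a b, limSlope f (γ t)) ≠ ⊤)
    (hfin : ∀ᵐ t ∂(volume.restrict (Icc a b)), limSlope f (γ t) ≠ 0) :
    ∃ (c d : ℝ) (s : ℝ → ℝ), c ≤ d ∧ MonotoneOn s (Icc c d) ∧ AbsContOn s c d ∧
      s c = a ∧ s d = b ∧ NearSteepestDescentCurve f c d (fun τ => γ (s τ)) :=
  statement5_general f a b hab γ hγ hint hfin
end

section
/- Let f : H → ℝ∪{±∞} be a lower-semicontinuous function on a finite-dimensional real inner product space H, and let x̄ be a point with f(x̄) finite. Then |∇f|(x̄) ≤ d(0, ∂̂f(x̄)), and furthermore the limiting slope satisfies |∇f|⁻(x̄) = d(0, ∂f(x̄)) (with the convention that the distance to the empty set is +∞). In particular, |∇f|⁻(x̄) = 0 if and only if 0 ∈ ∂f(x̄). -/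
open Filter Topology MeasureTheory Set NNReal ENNReal Pointwise

/-! A Fréchet subgradient `v` at `y` gives `f z ≥ f y - (‖v‖ + ε) ‖z - y‖` near `y`, so the slope
at `y` is at most `‖v‖`; passing to `f`-attentive limits gives `|∇f|⁻(x) ≤ d(0, ∂f(x))`.
Conversely, if the slope at `x` is below `r₀ < r`, then `f z ≥ f x - r₀ ‖z - x‖` near `x`.
Minimizing `f + r √(‖· - x‖² + d²)` over a small closed ball (lower semicontinuity and
compactness) gives a point `y` near `x`, with `f y` near `f x`, at which minus the gradient of
this smooth penalty is a Fréchet subgradient of `f` of norm at most `r`. Applied at points of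
small slope attentively close to `x`, this yields a sequence of such subgradients, and
compactness of bounded sets in `H` extracts a limiting subgradient of norm at most `r`. -/

namespace EReal

lemma toENNReal'_eq_toENNReal (x : EReal) : x.toENNReal' = x.toENNReal := rfl

lemma toENNReal_le_ofReal_iff {x : EReal} {s : ℝ} (hs : 0 ≤ s) :
    x.toENNReal ≤ ENNReal.ofReal s ↔ x ≤ s := by
  refine ⟨fun h => ?_, fun h => by simpa using toENNReal_le_toENNReal h⟩
  calc x ≤ max 0 x := le_max_right _ _
    _ = x.toENNReal := coe_toENNReal_eq_max.symm
    _ ≤ (ENNReal.ofReal s : EReal) := coe_ennreal_le_coe_ennreal_iff.2 h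
    _ = s := by rw [coe_ennreal_ofReal, max_eq_left hs]

lemma coe_sub_le_iff_le_add {a c : ℝ} {b : EReal} :
    ((a - c : ℝ) : EReal) ≤ b ↔ (a : EReal) ≤ b + c := by
  rw [coe_sub, sub_le_iff_le_add (.inl (coe_ne_bot c)) (.inl (coe_ne_top c))]

lemma coe_sub_le_iff_sub_le {a c : ℝ} {b : EReal} :
    ((a - c : ℝ) : EReal) ≤ b ↔ (a : EReal) - b ≤ c := by
  rw [coe_sub_le_iff_le_add, sub_le_iff_le_add (.inr (coe_ne_top c)) (.inr (coe_ne_bot c)),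
    add_comm]

end EReal

section AttentiveConvergence

variable {X Y : Type*} [TopologicalSpace X] [TopologicalSpace Y]

/-- `y → x` with `f y → f x` (`f`-attentive convergence); `limSlope f x` is by definition the
`liminf` of `mSlope f` along this filter. -/
def attentiveNhds (f : X → Y) (x : X) : Filter X :=
  comap (fun y => (y, f y)) (𝓝 (x, f x))

instance [FirstCountableTopology X] [FirstCountableTopology Y] (f : X → Y) (x : X) :
    (attentiveNhds f x).IsCountablyGenerated :=
  inferInstanceAs (comap _ _).IsCountablyGenerated

lemma tendsto_attentiveNhds_iff {ι : Type*} {l : Filter ι} {f : X → Y} {x : X} {u : ι → X} :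
    Tendsto u l (attentiveNhds f x) ↔
      Tendsto u l (𝓝 x) ∧ Tendsto (fun i => f (u i)) l (𝓝 (f x)) := by
  rw [attentiveNhds, tendsto_comap_iff, nhds_prod_eq, tendsto_prod_iff']
  rfl

lemma Filter.Frequently.of_frequently_attentiveNhds {f : X → Y} {x : X} {p : X → Prop}
    (h : ∃ᶠ z in attentiveNhds f x, ∃ᶠ y in attentiveNhds f z, p y) :
    ∃ᶠ y in attentiveNhds f x, p y := by
  refine fun hnot => h ?_
  obtain ⟨t, ht, hts⟩ := mem_comap.1 hnot
  filter_upwards [preimage_mem_comap (eventually_mem_nhds_iff.2 ht)] with z hz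
  exact fun hfreq => hfreq (mem_of_superset (preimage_mem_comap hz) hts)

end AttentiveConvergence

lemma Filter.exists_seq_forall_of_forall_frequently {α : Type*} {l : Filter α}
    [l.IsCountablyGenerated] {p : ℕ → α → Prop} (h : ∀ n, ∃ᶠ a in l, p n a) :
    ∃ u : ℕ → α, Tendsto u atTop l ∧ ∀ n, p n (u n) := by
  obtain ⟨s, hs⟩ := l.exists_antitone_basis
  choose u hu using fun n => ((h n).and_eventually (hs.mem n)).exists
  exact ⟨u, hs.tendsto fun n => (hu n).2, fun n => (hu n).1⟩

section Slope

variable {H : Type*} [NormedAddCommGroup H] [InnerProductSpace ℝ H]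

lemma mSlope_le_of_mem_frechetSubdiff {f : H → EReal} {y v : H} (hv : v ∈ frechetSubdiff f y) :
    mSlope f y ≤ ENNReal.ofReal ‖v‖ := by
  obtain ⟨⟨ry, hry⟩, hsub⟩ := hv
  refine ENNReal.le_of_forall_pos_le_add fun ε hε _ => ?_
  rw [← ENNReal.ofReal_coe_nnreal, ← ENNReal.ofReal_add (norm_nonneg v) ε.coe_nonneg]
  refine limsup_le_of_le (h := ?_)
  filter_upwards [nhdsWithin_le_nhds (hsub ε hε)] with z hz
  rw [hry, ← EReal.coe_add, ← sub_sub_cancel ry (_ + _), EReal.coe_sub_le_iff_sub_le] at hz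
  have hquot : (ry : EReal) - f z ≤ (((‖v‖ + ε) * ‖z - y‖ : ℝ) : EReal) := by
    refine hz.trans (EReal.coe_le_coe_iff.2 ?_)
    nlinarith [neg_abs_le (inner ℝ v (z - y)), abs_real_inner_le_norm v (z - y)]
  refine ENNReal.div_le_of_le_mul ?_
  rw [EReal.toENNReal'_eq_toENNReal, hry, edist_dist, dist_eq_norm, norm_sub_rev,
    ← ENNReal.ofReal_mul (by positivity)]
  exact (EReal.toENNReal_le_ofReal_iff (by positivity)).2 hquot

lemma mem_limitingSubdiff_of_tendsto {f : H → EReal} {x w : H} (hfx : ∃ rx : ℝ, f x = rx)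
    {y v : ℕ → H} (hy : Tendsto y atTop (attentiveNhds f x))
    (hv : ∀ n, v n ∈ frechetSubdiff f (y n)) (hvw : Tendsto v atTop (𝓝 w)) :
    w ∈ limitingSubdiff f x :=
  ⟨hfx, y, v, hv, (tendsto_attentiveNhds_iff.1 hy).1, (tendsto_attentiveNhds_iff.1 hy).2, hvw⟩

lemma limSlope_le_of_mem_limitingSubdiff {f : H → EReal} {x v : H}
    (hv : v ∈ limitingSubdiff f x) : limSlope f x ≤ ENNReal.ofReal ‖v‖ := by
  obtain ⟨-, y, w, hw, hy, hfy, hwv⟩ := hv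
  have hyA : Tendsto y atTop (attentiveNhds f x) := tendsto_attentiveNhds_iff.2 ⟨hy, hfy⟩
  calc limSlope f x ≤ liminf (fun n => mSlope f (y n)) atTop :=
        (liminf_le_liminf_of_le hyA).trans_eq (liminf_comp _ _ _).symm
    _ ≤ liminf (fun n => ENNReal.ofReal ‖w n‖) atTop :=
        liminf_le_liminf (.of_forall fun n => mSlope_le_of_mem_frechetSubdiff (hw n))
    _ = ENNReal.ofReal ‖v‖ :=
        (ENNReal.continuous_ofReal.tendsto _ |>.comp hwv.norm).liminf_eq

lemma mSlope_le_infEDist_frechetSubdiff (f : H → EReal) (x : H) :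
    mSlope f x ≤ Metric.infEDist 0 (frechetSubdiff f x) :=
  Metric.le_infEDist.2 fun v hv => (mSlope_le_of_mem_frechetSubdiff hv).trans_eq
    (by rw [edist_dist, dist_zero_left])

lemma limSlope_le_infEDist_limitingSubdiff (f : H → EReal) (x : H) :
    limSlope f x ≤ Metric.infEDist 0 (limitingSubdiff f x) :=
  Metric.le_infEDist.2 fun v hv => (limSlope_le_of_mem_limitingSubdiff hv).trans_eq
    (by rw [edist_dist, dist_zero_left])

end Slope

lemma eventually_coe_sub_le_of_mSlope_lt {X : Type*} [MetricSpace X] {f : X → EReal} {x : X}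
    {rx r : ℝ} (hfx : f x = rx) (h : mSlope f x < ENNReal.ofReal r) :
    ∀ᶠ z in 𝓝 x, ((rx - r * dist z x : ℝ) : EReal) ≤ f z := by
  have hr : 0 < r := ENNReal.ofReal_pos.1 (pos_of_gt h)
  have hquot := eventually_lt_of_limsup_lt h
  rw [eventually_nhdsWithin_iff] at hquot
  filter_upwards [hquot] with z hz
  rcases eq_or_ne z x with rfl | hzx
  · simp [hfx]
  have hlt := hz hzx
  rw [ENNReal.div_lt_iff (.inl (edist_pos.2 hzx.symm).ne') (.inl (edist_ne_top x z)),
    edist_dist, ← ENNReal.ofReal_mul hr.le, EReal.toENNReal'_eq_toENNReal] at hlt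
  rw [EReal.coe_sub_le_iff_sub_le, ← hfx, dist_comm]
  exact (EReal.toENNReal_le_ofReal_iff (by positivity)).1 hlt.le

section Fermat

variable {H : Type*} [NormedAddCommGroup H] [InnerProductSpace ℝ H] [CompleteSpace H]

lemma neg_mem_frechetSubdiff_of_isLocalMin_add {f : H → EReal} {p : H → ℝ} {y g : H}
    (hfy : ∃ r : ℝ, f y = r) (hmin : IsLocalMin (fun z => f z + p z) y)
    (hp : HasGradientAt p g y) : -g ∈ frechetSubdiff f y := by
  obtain ⟨ry, hry⟩ := hfy
  refine ⟨⟨ry, hry⟩, fun ε hε => ?_⟩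
  filter_upwards [hmin, (hasGradientAt_iff_isLittleO.1 hp).def hε] with z hmz hpz
  rw [hry, ← EReal.coe_add] at hmz ⊢
  refine le_trans (EReal.coe_le_coe_iff.2 ?_) (EReal.coe_sub_le_iff_le_add.2 hmz)
  rw [Real.norm_eq_abs, abs_le] at hpz
  rw [inner_neg_left]
  linarith [hpz.1]

lemma hasGradientAt_mul_sqrt_norm_sub_sq_add_sq (r : ℝ) (x y : H) {d : ℝ} (hd : d ≠ 0) :
    HasGradientAt (fun z => r * √(‖z - x‖ ^ 2 + d ^ 2))
      ((r / √(‖y - x‖ ^ 2 + d ^ 2)) • (y - x)) y := by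
  have hpos : 0 < ‖y - x‖ ^ 2 + d ^ 2 := by positivity
  rw [hasGradientAt_iff_hasFDerivAt]
  refine ((((hasFDerivAt_id y).sub_const x).norm_sq.add_const (d ^ 2)).sqrt
    hpos.ne').const_mul r |>.congr_fderiv ?_
  ext w
  simp
  field_simp

end Fermat

section Existence

variable {H : Type*} [NormedAddCommGroup H] [InnerProductSpace ℝ H] [FiniteDimensional ℝ H]

open Metric in
lemma exists_near_mem_frechetSubdiff_of_coe_sub_le {f : H → EReal} (hf : LowerSemicontinuous f)
    {x : H} {rx r₀ r δ s : ℝ} (hfx : f x = rx) (hr₀ : 0 ≤ r₀) (hr : r₀ < r) (hs : 0 < s)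
    (hsδ : s < δ) (hlow : ∀ z ∈ closedBall x δ, ((rx - r₀ * dist z x : ℝ) : EReal) ≤ f z) :
    ∃ y, dist y x ≤ s ∧ ((rx - r₀ * s : ℝ) : EReal) ≤ f y ∧ f y ≤ f x ∧
      ∃ v ∈ frechetSubdiff f y, ‖v‖ ≤ r := by
  have hr0 : 0 < r := hr₀.trans_lt hr
  set d := s * (r - r₀) / r
  have hd : 0 < d := by positivity
  set φ : H → ℝ := fun z => r * √(‖z - x‖ ^ 2 + d ^ 2)
  have hG : LowerSemicontinuous fun z => f z + φ z :=
    hf.add' (continuous_coe_real_ereal.comp (by fun_prop)).lowerSemicontinuous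
      fun z => EReal.continuousAt_add (.inr (EReal.coe_ne_bot _)) (.inr (EReal.coe_ne_top _))
  obtain ⟨y, hyδ, hymin⟩ := (hG.lowerSemicontinuousOn _).exists_isMinOn
    (nonempty_closedBall.2 (hs.trans hsδ).le) (isCompact_closedBall x δ)
  have hGy : f y + φ y ≤ ((rx + r * d : ℝ) : EReal) := by
    simpa [φ, hfx, hd.le, Real.sqrt_sq] using hymin (mem_closedBall_self (hs.trans hsδ).le)
  have hfy_low := hlow y hyδ
  have hfy_up : f y ≤ ((rx + r * d - φ y : ℝ) : EReal) := by
    rwa [EReal.coe_sub, EReal.le_sub_iff_add_le (.inl (EReal.coe_ne_bot _))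
      (.inl (EReal.coe_ne_top _))]
  obtain ⟨ry, hry⟩ : ∃ ry : ℝ, f y = ry :=
    ⟨(f y).toReal, (EReal.coe_toReal (hfy_up.trans_lt (EReal.coe_lt_top _)).ne
      (hfy_low.trans_lt' (EReal.bot_lt_coe _)).ne').symm⟩
  rw [hry, EReal.coe_le_coe_iff] at hfy_low hfy_up
  set S := √(‖y - x‖ ^ 2 + d ^ 2)
  have hS_norm : ‖y - x‖ ≤ S := Real.le_sqrt_of_sq_le (by nlinarith)
  have hS_dist : dist y x ≤ S := by rwa [dist_eq_norm]
  have hS_d : d ≤ S := Real.le_sqrt_of_sq_le (by nlinarith [norm_nonneg (y - x)])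
  have hrd : r * d = (r - r₀) * s := by
    simp only [d]
    field_simp
  -- the penalty `φ` grows at rate `r` while `f` decreases at rate at most `r₀ < r`
  have hys : dist y x ≤ s := by
    refine le_of_mul_le_mul_left ?_ (sub_pos.2 hr)
    nlinarith [mul_le_mul_of_nonneg_left hS_dist hr0.le]
  refine ⟨y, hys, ?_, ?_, ?_⟩
  · rw [hry, EReal.coe_le_coe_iff]
    nlinarith [mul_le_mul_of_nonneg_left hys hr₀]
  · rw [hry, hfx, EReal.coe_le_coe_iff]
    nlinarith [mul_le_mul_of_nonneg_left hS_d hr0.le]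
  refine ⟨_, neg_mem_frechetSubdiff_of_isLocalMin_add ⟨ry, hry⟩
    (hymin.isLocalMin (closedBall_mem_nhds_of_mem (mem_ball.2 (hys.trans_lt hsδ))))
    (hasGradientAt_mul_sqrt_norm_sub_sq_add_sq r x y hd.ne'), ?_⟩
  have hS : 0 < S := hd.trans_le hS_d
  rw [norm_neg, norm_smul, Real.norm_of_nonneg (by positivity)]
  calc r / S * ‖y - x‖ ≤ r / S * S := by gcongr
    _ = r := div_mul_cancel₀ r hS.ne'

lemma frequently_exists_mem_frechetSubdiff_of_mSlope_lt {f : H → EReal}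
    (hf : LowerSemicontinuous f) {x : H} (hfx : ∃ rx : ℝ, f x = rx) {r : ℝ}
    (h : mSlope f x < ENNReal.ofReal r) :
    ∃ᶠ y in attentiveNhds f x, ∃ v ∈ frechetSubdiff f y, ‖v‖ ≤ r := by
  obtain ⟨rx, hfx⟩ := hfx
  obtain ⟨r₀, hr₀, hslope, hr₀r⟩ := ENNReal.lt_iff_exists_real_btwn.1 h
  obtain ⟨δ, hδ, hlow⟩ := Metric.nhds_basis_closedBall.eventually_iff.1
    (eventually_coe_sub_le_of_mSlope_lt hfx hslope)
  set s : ℕ → ℝ := fun n => δ / (n + 2)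
  have hs : Tendsto s atTop (𝓝 0) :=
    tendsto_const_nhds.div_atTop (tendsto_atTop_add_const_right _ _ tendsto_natCast_atTop_atTop)
  have hnear : ∀ n, ∃ y, dist y x ≤ s n ∧ ((rx - r₀ * s n : ℝ) : EReal) ≤ f y ∧ f y ≤ f x ∧
      ∃ v ∈ frechetSubdiff f y, ‖v‖ ≤ r := fun n =>
    exists_near_mem_frechetSubdiff_of_coe_sub_le hf hfx hr₀
      ((ENNReal.ofReal_lt_ofReal_iff'.1 hr₀r).1) (by positivity)
      (div_lt_self hδ (by linarith)) fun z hz => hlow hz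
  choose y hyx hfy_low hfy_up hv using hnear
  refine (tendsto_attentiveNhds_iff.2 ⟨?_, ?_⟩).frequently
    (Eventually.of_forall (f := atTop) hv).frequently
  · exact tendsto_iff_dist_tendsto_zero.2 (squeeze_zero (fun _ => dist_nonneg) hyx hs)
  · have hlim : Tendsto (fun n => ((rx - r₀ * s n : ℝ) : EReal)) atTop (𝓝 (f x)) := by
      have hlim := (continuous_coe_real_ereal.tendsto _).comp
        ((tendsto_const_nhds (x := rx)).sub (hs.const_mul r₀))
      rwa [mul_zero, sub_zero, ← hfx] at hlim
    exact tendsto_of_tendsto_of_tendsto_of_le_of_le hlim tendsto_const_nhds hfy_low hfy_up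

lemma exists_seq_mem_frechetSubdiff_of_limSlope_lt {f : H → EReal}
    (hf : LowerSemicontinuous f) {x : H} (hfx : ∃ rx : ℝ, f x = rx) {r : ℕ → ℝ}
    (h : ∀ n, limSlope f x < ENNReal.ofReal (r n)) :
    ∃ y v : ℕ → H, Tendsto y atTop (attentiveNhds f x) ∧
      ∀ n, v n ∈ frechetSubdiff f (y n) ∧ ‖v n‖ ≤ r n := by
  obtain ⟨rx, hfx⟩ := hfx
  have hfin : ∀ᶠ z in attentiveNhds f x, ∃ rz : ℝ, f z = rz := by
    have hf_tendsto := (tendsto_attentiveNhds_iff (f := f) (x := x) (u := id)).1 tendsto_id |>.2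
    rw [hfx] at hf_tendsto
    filter_upwards [hf_tendsto.eventually_ne (EReal.coe_ne_top rx),
      hf_tendsto.eventually_ne (EReal.coe_ne_bot rx)] with z hz_top hz_bot
    exact ⟨(f z).toReal, (EReal.coe_toReal hz_top hz_bot).symm⟩
  have hfreq : ∀ n, ∃ᶠ y in attentiveNhds f x, ∃ v ∈ frechetSubdiff f y, ‖v‖ ≤ r n :=
    fun n => Frequently.of_frequently_attentiveNhds <|
      ((frequently_lt_of_liminf_lt (by isBoundedDefault) (h n)).and_eventually hfin).mono
        fun z hz => frequently_exists_mem_frechetSubdiff_of_mSlope_lt hf hz.2 hz.1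
  obtain ⟨y, hy, hyv⟩ := exists_seq_forall_of_forall_frequently hfreq
  choose v hv using hyv
  exact ⟨y, v, hy, hv⟩

lemma infEDist_limitingSubdiff_le_of_limSlope_lt {f : H → EReal} (hf : LowerSemicontinuous f)
    {x : H} (hfx : ∃ rx : ℝ, f x = rx) {r : ℝ} (h : limSlope f x < ENNReal.ofReal r) :
    Metric.infEDist 0 (limitingSubdiff f x) ≤ ENNReal.ofReal r := by
  obtain ⟨y, v, hy, hv⟩ := exists_seq_mem_frechetSubdiff_of_limSlope_lt hf hfx fun _ => h
  obtain ⟨w, hw, φ, hφ, hvw⟩ := (isCompact_closedBall (0 : H) r).tendsto_subseq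
    fun n => mem_closedBall_zero_iff.2 (hv n).2
  have hwf := mem_limitingSubdiff_of_tendsto hfx (hy.comp hφ.tendsto_atTop)
    (fun n => (hv (φ n)).1) hvw
  calc Metric.infEDist 0 (limitingSubdiff f x) ≤ edist 0 w := Metric.infEDist_le_edist_of_mem hwf
    _ = ENNReal.ofReal ‖w‖ := by rw [edist_dist, dist_zero_left]
    _ ≤ ENNReal.ofReal r := ENNReal.ofReal_le_ofReal (mem_closedBall_zero_iff.1 hw)

lemma zero_mem_limitingSubdiff_of_limSlope_eq_zero {f : H → EReal} (hf : LowerSemicontinuous f)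
    {x : H} (hfx : ∃ rx : ℝ, f x = rx) (h : limSlope f x = 0) : 0 ∈ limitingSubdiff f x := by
  obtain ⟨y, v, hy, hv⟩ := exists_seq_mem_frechetSubdiff_of_limSlope_lt hf hfx
    (r := fun n => 1 / (n + 1)) fun n => h ▸ ENNReal.ofReal_pos.2 Nat.one_div_pos_of_nat
  exact mem_limitingSubdiff_of_tendsto hfx hy (fun n => (hv n).1) <|
    squeeze_zero_norm (fun n => (hv n).2) tendsto_one_div_add_atTop_nhds_zero_nat

lemma limSlope_eq_infEDist_limitingSubdiff {f : H → EReal} (hf : LowerSemicontinuous f) {x : H}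
    (hfx : ∃ rx : ℝ, f x = rx) : limSlope f x = Metric.infEDist 0 (limitingSubdiff f x) := by
  refine (limSlope_le_infEDist_limitingSubdiff f x).antisymm
    (le_of_forall_gt_imp_ge_of_dense fun c hc => ?_)
  obtain ⟨r, -, hr, hrc⟩ := ENNReal.lt_iff_exists_real_btwn.1 hc
  exact (infEDist_limitingSubdiff_le_of_limSlope_lt hf hfx hr).trans hrc.le

end Existence

/-- Slope and subdifferentials. -/
theorem statement9 {H : Type*} [NormedAddCommGroup H] [InnerProductSpace ℝ H]
    [FiniteDimensional ℝ H]
    (f : H → EReal) (hf : LowerSemicontinuous f)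
    (xc : H) (hfin : ∃ r : ℝ, f xc = (r : EReal)) :
    mSlope f xc ≤ EMetric.infEdist 0 (frechetSubdiff f xc) ∧
    limSlope f xc = EMetric.infEdist 0 (limitingSubdiff f xc) ∧
    (limSlope f xc = 0 ↔ (0 : H) ∈ limitingSubdiff f xc) := by
  have hlim := limSlope_eq_infEDist_limitingSubdiff hf hfin
  refine ⟨mSlope_le_infEDist_frechetSubdiff f xc, hlim,
    zero_mem_limitingSubdiff_of_limSlope_eq_zero hf hfin, fun h0 => ?_⟩
  rw [hlim]
  exact Metric.infEDist_zero_of_mem h0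
end

section
/- Let f : ℝⁿ → ℝ∪{±∞} be a subdifferentially regular function (at every point of its domain). Then the limiting slope of f admits a chain rule: for every absolutely continuous curve x : (a,b) → ℝⁿ for which f∘x is non-increasing and ∂f(x(t)) is nonempty for a.e. t, one has (f∘x)'(t) = ⟨v, ẋ(t)⟩ for every v ∈ ∂f(x(t)), for a.e. t ∈ (a,b). -/
open Filter Topology MeasureTheory Set NNReal ENNReal Pointwise

section Semialgebraic

/-!
Regularity turns limiting subgradients into Fréchet subgradients: if `v ∈ ∂f(x)`, then `(v, -1)` is
a limiting normal to the epigraph at `(x, f x)`, hence a Fréchet normal by Clarke regularity, and a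
Fréchet normal of the form `(v, -1)` is exactly a Fréchet subgradient `v`.

A Fréchet subgradient `v` at `x(t)` makes `s ↦ f(x(s)) - ⟪v, x(s)⟫` minimal at `t` up to
`o(|s - t|)`, so wherever `f ∘ x` and `x` are both differentiable, the derivative
`(f ∘ x)'(t) - ⟪v, ẋ(t)⟫` vanishes. This holds for almost every `t`: since `∂f` is nonempty a.e.,
the antitone function `f ∘ x` is finite on `(a, b)`, and an absolutely continuous curve has
locally bounded variation.
-/

open scoped InnerProductSpace

theorem eVariationOn_le_of_edist_le {α E F : Type*} [LinearOrder α] [PseudoEMetricSpace E]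
    [PseudoEMetricSpace F] {f : α → E} {g : α → F} {s : Set α}
    (h : ∀ u ∈ s, ∀ v ∈ s, edist (f u) (f v) ≤ edist (g u) (g v)) :
    eVariationOn f s ≤ eVariationOn g s :=
  iSup_mono fun p => Finset.sum_le_sum fun _ _ => h _ (p.2.2.2 _) _ (p.2.2.2 _)

theorem AbsContOn.locallyBoundedVariationOn {X : Type*} [MetricSpace X] {γ : ℝ → X} {a b : ℝ}
    (hγ : AbsContOn γ a b) : LocallyBoundedVariationOn γ (Icc a b) := by
  obtain ⟨m, hm, hdist⟩ := hγ
  -- `γ` is 1-Lipschitz with respect to the monotone primitive `M` of `m`, so its variation is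
  -- at most that of `M`.
  set M : ℝ → ℝ := fun t => ∫ τ in a..t, m τ
  have hint : ∀ t ∈ Icc a b, IntervalIntegrable m volume a t := fun t ht =>
    (intervalIntegrable_iff_integrableOn_Icc_of_le ht.1).2 (hm.mono_set (Icc_subset_Icc_right ht.2))
  have hM : ∀ s ∈ Icc a b, ∀ t ∈ Icc a b, s ≤ t → dist (γ s) (γ t) ≤ M t - M s := by
    intro s hs t ht hst
    rw [intervalIntegral.integral_interval_sub_left (hint t ht) (hint s hs)]
    exact hdist s t hs.1 hst ht.2
  have hMmono : MonotoneOn M (Icc a b) := fun s hs t ht hst =>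
    sub_nonneg.1 (dist_nonneg.trans (hM s hs t ht hst))
  have hle : ∀ s ∈ Icc a b, ∀ t ∈ Icc a b, edist (γ s) (γ t) ≤ edist (M s) (M t) := by
    intro s hs t ht
    rw [edist_dist, edist_dist, Real.dist_eq]
    refine ENNReal.ofReal_le_ofReal ?_
    rcases le_total s t with hst | hts
    · rw [abs_sub_comm, abs_of_nonneg (sub_nonneg.2 (hMmono hs ht hst))]
      exact hM s hs t ht hst
    · rw [dist_comm, abs_of_nonneg (sub_nonneg.2 (hMmono ht hs hts))]
      exact hM t ht s hs hts
  intro c d hc hd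
  exact ne_top_of_le_ne_top (hMmono.locallyBoundedVariationOn c d hc hd)
    (eVariationOn_le_of_edist_le fun u hu v hv => hle u hu.1 v hv.1)

theorem LocallyBoundedVariationOn.ae_differentiableAt_of_mem_interior {V : Type*}
    [NormedAddCommGroup V] [NormedSpace ℝ V] [FiniteDimensional ℝ V] {f : ℝ → V} {s : Set ℝ}
    (h : LocallyBoundedVariationOn f s) : ∀ᵐ t, t ∈ interior s → DifferentiableAt ℝ f t := by
  filter_upwards [h.ae_differentiableWithinAt_of_mem] with t ht hts
  exact (ht (interior_subset hts)).differentiableAt (mem_interior_iff_mem_nhds.1 hts)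

theorem AntitoneOn.ae_differentiableAt_of_mem_interior {g : ℝ → ℝ} {s : Set ℝ}
    (hg : AntitoneOn g s) : ∀ᵐ t, t ∈ interior s → DifferentiableAt ℝ g t := by
  have hneg : MonotoneOn (-g) s := fun u hu v hv huv => neg_le_neg (hg hu hv huv)
  filter_upwards [hneg.locallyBoundedVariationOn.ae_differentiableAt_of_mem_interior] with t ht hts
  simpa using (ht hts).neg

theorem AntitoneOn.ne_top_of_ae_ne_top {β : Type*} [PartialOrder β] [OrderTop β] {φ : ℝ → β}
    {a b t : ℝ} (hφ : AntitoneOn φ (Ioo a b)) (hae : ∀ᵐ s ∂volume.restrict (Ioo a b), φ s ≠ ⊤)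
    (ht : t ∈ Ioo a b) : φ t ≠ ⊤ := by
  have hleft : ∀ᵐ s ∂volume.restrict (Ioo a t), s ∈ Ioo a t ∧ φ s ≠ ⊤ :=
    (ae_restrict_mem measurableSet_Ioo).and
      (ae_restrict_of_ae_restrict_of_subset (Ioo_subset_Ioo_right ht.2.le) hae)
  have : (ae (volume.restrict (Ioo a t))).NeBot :=
    ae_neBot.2 (by simp [Measure.restrict_eq_zero, ht.1])
  obtain ⟨s, hs, hφs⟩ := hleft.exists
  exact ne_top_of_le_ne_top hφs (hφ ⟨hs.1, hs.2.trans ht.2⟩ ht hs.2.le)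

theorem HasDerivAt.abs_le_of_eventually_sub_le {h : ℝ → ℝ} {c t ε : ℝ} (hh : HasDerivAt h c t)
    (hmin : ∀ᶠ s in 𝓝 t, h t - ε * |s - t| ≤ h s) : |c| ≤ ε := by
  have hslope := hasDerivAt_iff_tendsto_slope.1 hh
  rw [abs_le]
  constructor
  · refine ge_of_tendsto (hslope.mono_left (nhdsGT_le_nhdsNE t)) ?_
    filter_upwards [self_mem_nhdsWithin, eventually_nhdsWithin_of_eventually_nhds hmin]
      with s (hs : t < s) hs'
    rw [abs_of_pos (sub_pos.2 hs)] at hs'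
    rw [slope_def_field, le_div_iff₀ (sub_pos.2 hs)]
    linarith
  · refine le_of_tendsto (hslope.mono_left (nhdsLT_le_nhdsNE t)) ?_
    filter_upwards [self_mem_nhdsWithin, eventually_nhdsWithin_of_eventually_nhds hmin]
      with s (hs : s < t) hs'
    rw [abs_of_neg (sub_neg.2 hs)] at hs'
    rw [slope_def_field, div_le_iff_of_neg (sub_neg.2 hs)]
    linarith

theorem HasDerivAt.eq_zero_of_forall_eventually_sub_le {h : ℝ → ℝ} {c t : ℝ}
    (hh : HasDerivAt h c t) (hmin : ∀ ε > 0, ∀ᶠ s in 𝓝 t, h t - ε * |s - t| ≤ h s) : c = 0 :=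
  abs_nonpos_iff.1 <| le_of_forall_pos_le_add fun ε hε => by
    simpa using hh.abs_le_of_eventually_sub_le (hmin ε hε)

section Subdifferential

variable {H : Type*} [NormedAddCommGroup H] [InnerProductSpace ℝ H] {f : H → EReal}

theorem HasDerivAt.eventually_sub_le_of_mem_frechetSubdiff {x : ℝ → H} {x' v : H} {t ε : ℝ}
    (hx : HasDerivAt x x' t) (hfin : ∀ᶠ s in 𝓝 t, ∃ r : ℝ, f (x s) = r)
    (hv : v ∈ frechetSubdiff f (x t)) (hε : 0 < ε) :
    ∀ᶠ s in 𝓝 t, ((f (x t)).toReal - ⟪v, x t⟫_ℝ) - ε * |s - t|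
      ≤ (f (x s)).toReal - ⟪v, x s⟫_ℝ := by
  obtain ⟨ρ, hρ⟩ := hv.1
  obtain ⟨C, hC, hCx⟩ := hx.isBigO_sub.exists_pos
  filter_upwards [hx.continuousAt.eventually (hv.2 (ε / C) (div_pos hε hC)), hCx.bound, hfin]
    with s hsub hlip ⟨r, hr⟩
  rw [hρ, hr, ← EReal.coe_add, EReal.coe_le_coe_iff] at hsub
  rw [hρ, hr, EReal.toReal_coe, EReal.toReal_coe]
  rw [inner_sub_right] at hsub
  have : ε / C * ‖x s - x t‖ ≤ ε * |s - t| := by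
    calc ε / C * ‖x s - x t‖ ≤ ε / C * (C * ‖s - t‖) := by gcongr
      _ = ε * |s - t| := by rw [Real.norm_eq_abs]; field_simp
  linarith

theorem HasDerivAt.eq_inner_of_mem_frechetSubdiff {x : ℝ → H} {x' v : H} {t d : ℝ}
    (hx : HasDerivAt x x' t) (hd : HasDerivAt (fun s => (f (x s)).toReal) d t)
    (hfin : ∀ᶠ s in 𝓝 t, ∃ r : ℝ, f (x s) = r) (hv : v ∈ frechetSubdiff f (x t)) :
    d = ⟪v, x'⟫_ℝ := by
  have hvx : HasDerivAt (fun s => ⟪v, x s⟫_ℝ) ⟪v, x'⟫_ℝ t := by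
    simpa using (hasDerivAt_const t v).inner ℝ hx
  have hφ := hd.sub hvx
  exact sub_eq_zero.1 <| hφ.eq_zero_of_forall_eventually_sub_le fun ε hε =>
    hx.eventually_sub_le_of_mem_frechetSubdiff hfin hv hε

end Subdifferential

theorem erealIndicator_of_mem {E : Type*} {Q : Set E} {p : E} (hp : p ∈ Q) :
    erealIndicator Q p = ((0 : ℝ) : EReal) := by
  simp [erealIndicator, hp]

section NormalCone

variable {E : Type*} [NormedAddCommGroup E] [InnerProductSpace ℝ E] {Q : Set E} {q u : E}

theorem mem_frechetNormalCone_iff (hq : q ∈ Q) :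
    u ∈ frechetNormalCone Q q ↔ ∀ ε > 0, ∀ᶠ p in 𝓝 q, p ∈ Q → ⟪u, p - q⟫_ℝ ≤ ε * ‖p - q‖ := by
  simp only [frechetNormalCone, frechetSubdiff, erealIndicator_of_mem hq]
  refine ⟨fun h ε hε => (h.2 ε hε).mono fun p hp hpQ => ?_,
    fun h => ⟨⟨0, rfl⟩, fun ε hε => (h ε hε).mono fun p hp => ?_⟩⟩
  · rw [erealIndicator_of_mem hpQ, ← EReal.coe_add, EReal.coe_le_coe_iff] at hp
    linarith
  · by_cases hpQ : p ∈ Q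
    · rw [erealIndicator_of_mem hpQ, ← EReal.coe_add, EReal.coe_le_coe_iff]
      linarith [hp hpQ]
    · simp [erealIndicator, hpQ]

theorem mem_limitingNormalCone_of_tendsto (hq : q ∈ Q) {p w : ℕ → E} (hpQ : ∀ i, p i ∈ Q)
    (hw : ∀ i, w i ∈ frechetNormalCone Q (p i)) (hp : Tendsto p atTop (𝓝 q))
    (hwu : Tendsto w atTop (𝓝 u)) : u ∈ limitingNormalCone Q q :=
  ⟨⟨0, erealIndicator_of_mem hq⟩, p, w, hw, hp, by
    simpa only [erealIndicator_of_mem hq, erealIndicator_of_mem (hpQ _)] using tendsto_const_nhds,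
    hwu⟩

end NormalCone

def epigraph {H : Type*} (f : H → EReal) : Set (WithLp 2 (H × ℝ)) :=
  {p | f p.fst ≤ (p.snd : EReal)}

theorem toLp_mem_epigraph {H : Type*} {f : H → EReal} {y : H} {r : ℝ} :
    WithLp.toLp 2 (y, r) ∈ epigraph f ↔ f y ≤ r :=
  Iff.rfl

theorem WithLp.norm_le_norm_fst_add_abs_snd {α : Type*} [SeminormedAddCommGroup α]
    (p : WithLp 2 (α × ℝ)) : ‖p‖ ≤ ‖p.fst‖ + |p.snd| := by
  have h := WithLp.prod_norm_sq_eq_of_L2 p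
  rw [Real.norm_eq_abs, sq_abs] at h
  nlinarith [norm_nonneg p, norm_nonneg p.fst, abs_nonneg p.snd, sq_abs p.snd]

section Epigraph

variable {H : Type*} [NormedAddCommGroup H] [InnerProductSpace ℝ H] {f : H → EReal}

theorem WithLp.inner_toLp_left (v : H) (r : ℝ) (p : WithLp 2 (H × ℝ)) :
    ⟪WithLp.toLp 2 (v, r), p⟫_ℝ = ⟪v, p.fst⟫_ℝ + r * p.snd := by
  simp [WithLp.prod_inner_apply, mul_comm]

theorem toLp_mem_frechetNormalCone_epigraph {z w : H} {ρ : ℝ} (hz : f z = ρ)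
    (hw : w ∈ frechetSubdiff f z) :
    WithLp.toLp 2 (w, -1) ∈ frechetNormalCone (epigraph f) (WithLp.toLp 2 (z, ρ)) := by
  rw [mem_frechetNormalCone_iff (toLp_mem_epigraph.2 hz.le)]
  intro ε hε
  have hfst : Tendsto WithLp.fst (𝓝 (WithLp.toLp 2 (z, ρ))) (𝓝 z) :=
    (WithLp.continuous_fst 2 H ℝ).tendsto _
  filter_upwards [hfst.eventually (hw.2 ε hε)] with p hp hpQ
  have hsub : ρ + (⟪w, p.fst - z⟫_ℝ - ε * ‖p.fst - z‖) ≤ p.snd := by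
    have := hp.trans hpQ
    rw [hz] at this
    exact_mod_cast this
  have hnorm : ‖p.fst - z‖ ≤ ‖p - WithLp.toLp 2 (z, ρ)‖ := by
    simpa using WithLp.norm_fst_le H (p - WithLp.toLp 2 (z, ρ))
  rw [WithLp.inner_toLp_left]
  simp only [WithLp.sub_fst, WithLp.sub_snd, WithLp.toLp_fst, WithLp.toLp_snd]
  nlinarith

theorem toLp_mem_limitingNormalCone_epigraph {xc v : H} {ρ : ℝ} (hxc : f xc = ρ)
    (hv : v ∈ limitingSubdiff f xc) :
    WithLp.toLp 2 (v, -1) ∈ limitingNormalCone (epigraph f) (WithLp.toLp 2 (xc, ρ)) := by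
  obtain ⟨-, y, w, hw, hy, hfy, hwv⟩ := hv
  choose r hr using fun i => (hw i).1
  have hrρ : Tendsto r atTop (𝓝 ρ) := by
    have := (EReal.tendsto_toReal (hxc ▸ EReal.coe_ne_top ρ) (hxc ▸ EReal.coe_ne_bot ρ)).comp hfy
    simpa [Function.comp_def, hr, hxc] using this
  have htoLp := (WithLp.prod_continuous_toLp 2 H ℝ).tendsto
  exact mem_limitingNormalCone_of_tendsto (toLp_mem_epigraph.2 hxc.le)
    (p := fun i => WithLp.toLp 2 (y i, r i)) (fun i => toLp_mem_epigraph.2 (hr i).le)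
    (fun i => toLp_mem_frechetNormalCone_epigraph (hr i) (hw i))
    ((htoLp _).comp (hy.prodMk_nhds hrρ)) ((htoLp _).comp (hwv.prodMk_nhds tendsto_const_nhds))

theorem mem_frechetSubdiff_of_toLp_mem_frechetNormalCone {xc v : H} {ρ : ℝ} (hxc : f xc = ρ)
    (hv : WithLp.toLp 2 (v, -1) ∈ frechetNormalCone (epigraph f) (WithLp.toLp 2 (xc, ρ))) :
    v ∈ frechetSubdiff f xc := by
  rw [mem_frechetNormalCone_iff (toLp_mem_epigraph.2 hxc.le)] at hv
  refine ⟨⟨ρ, hxc⟩, fun ε hε => ?_⟩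
  set c := ‖v‖ + ε
  have hc : 0 < 1 + c := by positivity
  obtain ⟨δ, hδ, hnormal⟩ := Metric.eventually_nhds_iff.1 (hv (ε / (2 * (1 + c))) (by positivity))
  filter_upwards [Metric.ball_mem_nhds xc (div_pos hδ hc)] with y hy
  rw [mem_ball_iff_norm] at hy
  rw [hxc]
  by_contra! hlt
  obtain ⟨s, hys, hs⟩ := EReal.lt_iff_exists_real_btwn.1 hlt
  rw [← EReal.coe_add, EReal.coe_lt_coe_iff] at hs
  set A := ⟪v, y - xc⟫_ℝ
  have hA : |A| ≤ ‖v‖ * ‖y - xc‖ := abs_real_inner_le_norm v (y - xc)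
  -- Lifting `y` to height `R` puts it in the epigraph with `|R - ρ| ≤ c ‖y - xc‖`, close enough
  -- to `(xc, ρ)` for the normal-cone inequality, which then forces `y = xc`.
  set R := max s (ρ - c * ‖y - xc‖)
  have hRup : R - ρ ≤ A - ε * ‖y - xc‖ := by
    refine sub_le_iff_le_add'.2 (max_le (by linarith) ?_)
    nlinarith [norm_nonneg (y - xc), (abs_le.1 hA).1]
  have hRabs : |R - ρ| ≤ c * ‖y - xc‖ := by
    refine abs_le.2 ⟨by linarith [le_max_right s (ρ - c * ‖y - xc‖)], ?_⟩
    nlinarith [norm_nonneg (y - xc), (abs_le.1 hA).2]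
  set P := WithLp.toLp 2 (y, R)
  set q := WithLp.toLp 2 (xc, ρ)
  have hPq : ‖P - q‖ ≤ (1 + c) * ‖y - xc‖ := by
    refine (WithLp.norm_le_norm_fst_add_abs_snd _).trans ?_
    simp only [P, q, WithLp.sub_fst, WithLp.sub_snd, WithLp.toLp_fst, WithLp.toLp_snd]
    linarith
  have hPQ : P ∈ epigraph f := toLp_mem_epigraph.2 (hys.le.trans (EReal.coe_le_coe_iff.2 (le_max_left _ _)))
  have hdist : dist P q < δ := by
    rw [dist_eq_norm]
    calc ‖P - q‖ ≤ (1 + c) * ‖y - xc‖ := hPq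
      _ < (1 + c) * (δ / (1 + c)) := by gcongr
      _ = δ := by field_simp
  have hPnormal := hnormal hdist hPQ
  rw [WithLp.inner_toLp_left] at hPnormal
  simp only [P, q, WithLp.sub_fst, WithLp.sub_snd, WithLp.toLp_fst, WithLp.toLp_snd] at hPnormal
  have hsmall : ε / (2 * (1 + c)) * ‖P - q‖ ≤ ε / 2 * ‖y - xc‖ := by
    calc ε / (2 * (1 + c)) * ‖P - q‖ ≤ ε / (2 * (1 + c)) * ((1 + c) * ‖y - xc‖) := by gcongr
      _ = ε / 2 * ‖y - xc‖ := by field_simp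
  have hyxc : y = xc := by
    rw [← sub_eq_zero, ← norm_le_zero_iff]
    nlinarith
  subst hyxc
  simp only [A, sub_self, inner_zero_right, norm_zero, mul_zero] at hs
  rw [hxc, EReal.coe_lt_coe_iff] at hys
  linarith

theorem SubdiffRegularAt.limitingSubdiff_subset_frechetSubdiff {xc : H}
    (hreg : SubdiffRegularAt f xc) : limitingSubdiff f xc ⊆ frechetSubdiff f xc := by
  obtain ⟨⟨ρ, hρ⟩, -, -, hN⟩ := hreg
  rw [hρ, EReal.toReal_coe] at hN
  change limitingNormalCone (epigraph f) (WithLp.toLp 2 (xc, ρ))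
    = frechetNormalCone (epigraph f) (WithLp.toLp 2 (xc, ρ)) at hN
  intro v hv
  exact mem_frechetSubdiff_of_toLp_mem_frechetNormalCone hρ
    (hN ▸ toLp_mem_limitingNormalCone_epigraph hρ hv)

end Epigraph

/-- Chain rule under subdifferential regularity. -/
theorem statement12 {n : ℕ} (f : EuclideanSpace ℝ (Fin n) → EReal)
    (hreg : ∀ x : EuclideanSpace ℝ (Fin n), f x ≠ ⊤ → SubdiffRegularAt f x) :
    LimitingSlopeChainRule f := by
  intro a b x hAC hAnti hae
  rw [← Measure.restrict_congr_set Ioo_ae_eq_Icc] at hae ⊢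
  have hne_top : ∀ t ∈ Ioo a b, f (x t) ≠ ⊤ := fun t ht =>
    (hAnti.mono Ioo_subset_Icc_self).ne_top_of_ae_ne_top
      (hae.mono fun _ ⟨_, ⟨r, hr⟩, _⟩ => hr ▸ EReal.coe_ne_top r) ht
  have hfin : ∀ t ∈ Ioo a b, ∃ r : ℝ, f (x t) = r := fun t ht => (hreg _ (hne_top t ht)).1
  have hg : AntitoneOn (fun t => (f (x t)).toReal) (Ioo a b) := by
    intro s hs t ht hst
    obtain ⟨r, hr⟩ := hfin s hs
    obtain ⟨r', hr'⟩ := hfin t ht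
    simpa [hr, hr'] using hAnti (Ioo_subset_Icc_self hs) (Ioo_subset_Icc_self ht) hst
  rw [ae_restrict_iff' measurableSet_Ioo]
  filter_upwards [hg.ae_differentiableAt_of_mem_interior,
    hAC.locallyBoundedVariationOn.ae_differentiableAt_of_mem_interior] with t hgt hxt ht
  rw [interior_Ioo] at hgt
  rw [interior_Icc] at hxt
  refine ⟨_, _, (hgt ht).hasDerivAt, (hxt ht).hasDerivAt, fun v hv => ?_⟩
  exact (hxt ht).hasDerivAt.eq_inner_of_mem_frechetSubdiff (hgt ht).hasDerivAt
    (eventually_of_mem (Ioo_mem_nhds ht.1 ht.2) hfin)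
    ((hreg _ (hne_top t ht)).limitingSubdiff_subset_frechetSubdiff hv)
end Semialgebraic
end
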